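/- arXiv:1206.3522 — 7 statements merged into one kernel-verified Lean document; each statement's English description precedes it below -/
import Mathlib

section
/- Let m ≥ 1 and s_1, ..., s_{m-1} ∈ (0,1]. Let (X_t)_{t≥0} be a stochastic process with values in {1,...,m}, adapted to a filtration (F_t), such that X_{t+1} ≥ X_t almost surely (elitism), and such that for every t ≥ 0 and every i with 1 ≤ i ≤ m-1, almost surely on the event {X_t = i} one has P(X_{t+1} ≥ i+1 | F_t) ≥ s_i. Let T = inf{t ≥ 0 : X_t = m}. Then E[T] ≤ Σ_{i=1}^{m-1} 1/s_i. -/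
open MeasureTheory ProbabilityTheory ENNReal

/-!
Write `T` for the hitting time of the top level `m`. Since `T ≤ ∑ₜ 1{X t ≠ m}`,
`E[T] ≤ ∑ₜ P(X t ≠ m) = ∑_{i < m} ∑ₜ P(X t = i)`, so it suffices to bound the expected time
spent on each level `i` by `1 / s i`. Conditioning on `ℱ t`, the event `{X t = i}` leaves the
sublevel set `{X ≤ i}` with probability at least `s i`, and by elitism nothing enters it, so
`P(X (t+1) ≤ i) + s i · P(X t = i) ≤ P(X t ≤ i)`. Telescoping gives
`s i · ∑ₜ P(X t = i) ≤ P(X 0 ≤ i) ≤ 1`.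
-/

theorem iInf_mem_le_tsum_indicator_compl (S : Set ℕ) :
    ⨅ t ∈ S, (t : ℝ≥0∞) ≤ ∑' t, Sᶜ.indicator (fun _ ↦ 1) t := by
  classical
  by_cases hS : ∃ t, t ∈ S
  · calc ⨅ t ∈ S, (t : ℝ≥0∞) ≤ Nat.find hS := biInf_le _ (Nat.find_spec hS)
      _ = ∑ t ∈ Finset.range (Nat.find hS), Sᶜ.indicator (fun _ ↦ 1) t := by
        rw [Finset.sum_congr rfl fun t ht ↦
          Set.indicator_of_mem (Nat.find_min hS (Finset.mem_range.1 ht)) _]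
        simp
      _ ≤ ∑' t, Sᶜ.indicator (fun _ ↦ 1) t := ENNReal.sum_le_tsum _
  · push Not at hS
    simp [Set.indicator_of_mem (s := Sᶜ) (hS _)]

theorem lintegral_iInf_mem_le_tsum_measure_compl {Ω : Type*} {mΩ : MeasurableSpace Ω}
    (μ : Measure Ω) {A : ℕ → Set Ω} (hA : ∀ t, MeasurableSet (A t)) :
    ∫⁻ ω, ⨅ (t : ℕ) (_ : ω ∈ A t), (t : ℝ≥0∞) ∂μ ≤ ∑' t, μ (A t)ᶜ :=
  calc ∫⁻ ω, ⨅ (t : ℕ) (_ : ω ∈ A t), (t : ℝ≥0∞) ∂μ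
      ≤ ∫⁻ ω, ∑' t, (A t)ᶜ.indicator (fun _ ↦ 1) ω ∂μ :=
        lintegral_mono fun ω ↦ iInf_mem_le_tsum_indicator_compl {t | ω ∈ A t}
    _ = ∑' t, μ (A t)ᶜ := by
        rw [lintegral_tsum fun t ↦ (measurable_const.indicator (hA t).compl).aemeasurable]
        exact tsum_congr fun t ↦ lintegral_indicator_one (hA t).compl

theorem mul_measureReal_le_measureReal_inter_of_le_condExp {Ω : Type*} {m m₀ : MeasurableSpace Ω}
    {μ : Measure Ω} [IsFiniteMeasure μ] (hm : m ≤ m₀) {B S : Set Ω} {c : ℝ}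
    (hB : MeasurableSet[m] B) (hS : MeasurableSet S)
    (hc : ∀ᵐ ω ∂μ, ω ∈ B → c ≤ (μ[S.indicator (fun _ ↦ (1 : ℝ)) | m]) ω) :
    c * μ.real B ≤ μ.real (S ∩ B) :=
  calc c * μ.real B = ∫ _ in B, c ∂μ := by rw [setIntegral_const, smul_eq_mul, mul_comm]
    _ ≤ ∫ ω in B, (μ[S.indicator (fun _ ↦ (1 : ℝ)) | m]) ω ∂μ :=
        setIntegral_mono_ae_restrict (integrableOn_const (measure_ne_top μ B))
          integrable_condExp.integrableOn ((ae_restrict_iff' (hm B hB)).2 hc)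
    _ = ∫ ω in B, S.indicator (fun _ ↦ (1 : ℝ)) ω ∂μ :=
        setIntegral_condExp hm ((integrable_const 1).indicator hS) hB
    _ = μ.real (S ∩ B) := by
        rw [setIntegral_indicator hS, setIntegral_const, smul_eq_mul, mul_one,
          Set.inter_comm]

theorem measureReal_sublevel_succ_add_mul_le {Ω : Type*} {mΩ : MeasurableSpace Ω}
    {P : Measure Ω} [IsFiniteMeasure P] {ℱ : Filtration ℕ mΩ} {X : ℕ → Ω → ℕ}
    (hadapted : Adapted ℱ X) {t i : ℕ} {c : ℝ} (hmono : ∀ᵐ ω ∂P, X t ω ≤ X (t + 1) ω)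
    (hstep : ∀ᵐ ω ∂P, X t ω = i →
      c ≤ (P[Set.indicator {ω' | i + 1 ≤ X (t + 1) ω'} (fun _ ↦ (1 : ℝ)) | ℱ t]) ω) :
    P.real {ω | X (t + 1) ω ≤ i} + c * P.real {ω | X t ω = i} ≤ P.real {ω | X t ω ≤ i} := by
  set B := {ω | X t ω = i}
  set S := {ω | i + 1 ≤ X (t + 1) ω}
  have hBℱ : MeasurableSet[ℱ t] B := hadapted t (measurableSet_singleton i)
  have hS : MeasurableSet S := (hadapted (t + 1)).mono (ℱ.le _) le_rfl measurableSet_Ici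
  have hprogress : c * P.real B ≤ P.real (S ∩ B) :=
    mul_measureReal_le_measureReal_inter_of_le_condExp (ℱ.le t) hBℱ hS hstep
  have hdisj : Disjoint {ω | X (t + 1) ω ≤ i} (S ∩ B) := by
    rw [Set.disjoint_left]
    rintro ω (hle : X (t + 1) ω ≤ i) ⟨hlt : i + 1 ≤ X (t + 1) ω, -⟩
    omega
  have hsub : ({ω | X (t + 1) ω ≤ i} ∪ S ∩ B : Set Ω) ≤ᵐ[P] {ω | X t ω ≤ i} := by
    filter_upwards [hmono] with ω hω hmem
    rcases hmem with hle | ⟨-, heq⟩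
    · exact hω.trans hle
    · exact heq.le
  calc P.real {ω | X (t + 1) ω ≤ i} + c * P.real B
      ≤ P.real {ω | X (t + 1) ω ≤ i} + P.real (S ∩ B) := by gcongr
    _ = P.real ({ω | X (t + 1) ω ≤ i} ∪ (S ∩ B)) :=
        (measureReal_union hdisj (hS.inter (ℱ.le t B hBℱ))).symm
    _ ≤ P.real {ω | X t ω ≤ i} := ENNReal.toReal_mono (measure_ne_top _ _) (measure_mono_ae hsub)

theorem tsum_measure_le_of_add_mul_measureReal_le {Ω : Type*} {mΩ : MeasurableSpace Ω}
    {μ : Measure Ω} [IsProbabilityMeasure μ] {A L : ℕ → Set Ω} {c : ℝ} (hc : 0 < c)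
    (h : ∀ t, μ.real (L (t + 1)) + c * μ.real (A t) ≤ μ.real (L t)) :
    ∑' t, μ (A t) ≤ ENNReal.ofReal (1 / c) := by
  refine ENNReal.tsum_le_of_sum_range_le fun n ↦ ?_
  have htelescope : c * ∑ t ∈ Finset.range n, μ.real (A t) + μ.real (L n) ≤ μ.real (L 0) := by
    induction n with
    | zero => simp
    | succ n ih => rw [Finset.sum_range_succ]; linarith [h n]
  have hsum : ∑ t ∈ Finset.range n, μ.real (A t) ≤ 1 / c := by
    rw [le_div_iff₀' hc]
    linarith [measureReal_nonneg (μ := μ) (s := L n), measureReal_le_one (μ := μ) (s := L 0)]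
  calc ∑ t ∈ Finset.range n, μ (A t) = ENNReal.ofReal (∑ t ∈ Finset.range n, μ.real (A t)) := by
        rw [ENNReal.ofReal_sum_of_nonneg fun _ _ ↦ measureReal_nonneg]
        exact Finset.sum_congr rfl fun t _ ↦ (ofReal_measureReal (measure_ne_top μ _)).symm
    _ ≤ ENNReal.ofReal (1 / c) := ENNReal.ofReal_le_ofReal hsum

theorem fitness_level_method_general
    {Ω : Type} {mΩ : MeasurableSpace Ω} (P : Measure Ω) [IsProbabilityMeasure P]
    (m : ℕ) (s : ℕ → ℝ)
    (hs : ∀ i, 1 ≤ i → i + 1 ≤ m → 0 < s i ∧ s i ≤ 1)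
    (ℱ : Filtration ℕ mΩ) (X : ℕ → Ω → ℕ)
    (hadapted : Adapted ℱ X)
    (hrange : ∀ t ω, 1 ≤ X t ω ∧ X t ω ≤ m)
    (hmono : ∀ t, ∀ᵐ ω ∂P, X t ω ≤ X (t + 1) ω)
    (hstep : ∀ t i, 1 ≤ i → i + 1 ≤ m →
      ∀ᵐ ω ∂P, X t ω = i →
        s i ≤ (P[Set.indicator {ω' | i + 1 ≤ X (t + 1) ω'} (fun _ => (1 : ℝ)) | ℱ t]) ω) :
    ∫⁻ ω, (⨅ (t : ℕ) (_ : X t ω = m), (t : ℝ≥0∞)) ∂P ≤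
      ENNReal.ofReal (∑ i ∈ Finset.Icc 1 (m - 1), 1 / s i) := by
  have hlevels : ∀ i ∈ Finset.Icc 1 (m - 1), 1 ≤ i ∧ i + 1 ≤ m := fun i hi ↦ by
    rw [Finset.mem_Icc] at hi; omega
  have htime_at_level : ∀ i ∈ Finset.Icc 1 (m - 1),
      ∑' t, P {ω | X t ω = i} ≤ ENNReal.ofReal (1 / s i) := fun i hi ↦
    tsum_measure_le_of_add_mul_measureReal_le (L := fun t ↦ {ω | X t ω ≤ i})
      (hs i (hlevels i hi).1 (hlevels i hi).2).1 fun t ↦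
        measureReal_sublevel_succ_add_mul_le hadapted (hmono t)
          (hstep t i (hlevels i hi).1 (hlevels i hi).2)
  have hcover : ∀ t, {ω | X t ω = m}ᶜ ⊆ ⋃ i ∈ Finset.Icc 1 (m - 1), {ω | X t ω = i} :=
    fun t ω (hω : X t ω ≠ m) ↦ Set.mem_biUnion (x := X t ω)
      (Finset.mem_Icc.2 ⟨(hrange t ω).1, by have := (hrange t ω).2; omega⟩) rfl
  calc ∫⁻ ω, (⨅ (t : ℕ) (_ : X t ω = m), (t : ℝ≥0∞)) ∂P
      ≤ ∑' t, P {ω | X t ω = m}ᶜ := lintegral_iInf_mem_le_tsum_measure_compl P fun t ↦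
        (hadapted t).mono (ℱ.le t) le_rfl (measurableSet_singleton m)
    _ ≤ ∑' t, ∑ i ∈ Finset.Icc 1 (m - 1), P {ω | X t ω = i} :=
        ENNReal.tsum_le_tsum fun t ↦ (measure_mono (hcover t)).trans (measure_biUnion_finset_le _ _)
    _ = ∑ i ∈ Finset.Icc 1 (m - 1), ∑' t, P {ω | X t ω = i} :=
        Summable.tsum_finsetSum fun _ _ ↦ ENNReal.summable
    _ ≤ ∑ i ∈ Finset.Icc 1 (m - 1), ENNReal.ofReal (1 / s i) := Finset.sum_le_sum htime_at_level
    _ = ENNReal.ofReal (∑ i ∈ Finset.Icc 1 (m - 1), 1 / s i) :=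
        (ENNReal.ofReal_sum_of_nonneg fun i hi ↦
          (one_div_pos.2 (hs i (hlevels i hi).1 (hlevels i hi).2).1).le).symm

/-- **The fitness-level method.** Let `m ≥ 1` and `s 1, ..., s (m-1) ∈ (0,1]`. Let `X` be a
stochastic process with values in `{1, ..., m}`, adapted to a filtration `ℱ`, which is
almost surely non-decreasing (elitism), and such that for every `t` and every level
`1 ≤ i ≤ m - 1`, almost surely on the event `{X t = i}` the conditional probability (given
`ℱ t`) of reaching a level `≥ i + 1` at time `t + 1` is at least `s i`. Then the expected
hitting time of level `m` is at most `∑_{i=1}^{m-1} 1 / s i`. -/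
theorem fitness_level_method
    {Ω : Type} {mΩ : MeasurableSpace Ω} (P : Measure Ω) [IsProbabilityMeasure P]
    (m : ℕ) (hm : 1 ≤ m) (s : ℕ → ℝ)
    (hs : ∀ i, 1 ≤ i → i + 1 ≤ m → 0 < s i ∧ s i ≤ 1)
    (ℱ : Filtration ℕ mΩ) (X : ℕ → Ω → ℕ)
    (hadapted : Adapted ℱ X)
    (hrange : ∀ t ω, 1 ≤ X t ω ∧ X t ω ≤ m)
    (hmono : ∀ t, ∀ᵐ ω ∂P, X t ω ≤ X (t + 1) ω)
    (hstep : ∀ t i, 1 ≤ i → i + 1 ≤ m →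
      ∀ᵐ ω ∂P, X t ω = i →
        s i ≤ (P[Set.indicator {ω' | i + 1 ≤ X (t + 1) ω'} (fun _ => (1 : ℝ)) | ℱ t]) ω) :
    ∫⁻ ω, (⨅ (t : ℕ) (_ : X t ω = m), (t : ℝ≥0∞)) ∂P ≤
      ENNReal.ofReal (∑ i ∈ Finset.Icc 1 (m - 1), 1 / s i) :=
  fitness_level_method_general P m s hs ℱ X hadapted hrange hmono hstep
end

section
/- In the island model with fitness levels, fix a level i with 1 ≤ i ≤ m-1, and let G be the first generation at which some island has level at least i. For 1 ≤ k ≤ μ, let T(k) be the number of generations after G until at least k islands have level at least i, and let L be the number of generations after G until some island has level at least i+1. Then for every k with 1 ≤ k ≤ μ, E[L] ≤ E[T(k)] + 1 + 1/(k·s_i). -/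
/-!
Split `L - G ≤ (T(k) - G) + (L - T(k))`. From generation `T(k)` on, at least `k` islands have
level `≥ i`; as long as no island has reached level `i + 1`, each of them sits at level exactly
`i` and must fail its own variation trial in every generation. Since `T(k)` and this set of
islands are determined by the history at `T(k)`, while the later trials are independent of that
history, `P(L - T(k) > t) ≤ (1 - s i) ^ (k t)`. Summing these tails,
`E[L - T(k)] ≤ 1 / (1 - (1 - s i) ^ k) ≤ 1 + 1 / (k s i)`, the last step by Bernoulli's
inequality.
-/

open MeasureTheory ProbabilityTheory ENNReal

/-- An island model with fitness levels. There are `nIslands` islands connected by the directed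
migration topology `edge`, `m` fitness levels, success probabilities `s`, and a transmission
probability `p`. `X t v` is the level of island `v` at generation `t`. The model is driven by
independent Boolean random variables: `succ t v i` indicates that island `v` would create, by
its own variation, a point of level `> i` in generation `t + 1` if its level at generation `t`
is `i`; `trans t u v` indicates that transmission along the directed edge `(u, v)` succeeds in
generation `t + 1`. -/
structure IslandModel where
  Ω : Type
  mΩ : MeasurableSpace Ω
  P : MeasureTheory.Measure Ω
  nIslands : ℕ
  m : ℕ
  edge : Fin nIslands → Fin nIslands → Prop
  s : ℕ → ℝ
  p : ℝ
  X : ℕ → Fin nIslands → Ω → ℕ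
  succ : ℕ → Fin nIslands → ℕ → Ω → Bool
  trans : ℕ → Fin nIslands → Fin nIslands → Ω → Bool

namespace IslandModel

instance (M : IslandModel) : MeasurableSpace M.Ω := M.mΩ

/-- The combined family of driving Boolean random variables, indexed by the generation and
either an (island, level) pair (variation) or a directed edge (transmission). -/
def B (M : IslandModel) :
    ℕ × (Fin M.nIslands × ℕ ⊕ Fin M.nIslands × Fin M.nIslands) → M.Ω → Bool
  | (t, Sum.inl (v, i)) => M.succ t v i
  | (t, Sum.inr (u, v)) => M.trans t u v

/-- The history σ-algebra up to generation `t`: generated by the levels of all islands up to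
generation `t` together with the driving Boolean variables of the generations before `t`. -/
def hist (M : IslandModel) (t : ℕ) : MeasurableSpace M.Ω :=
  (⨆ q : {q : ℕ // q ≤ t} × Fin M.nIslands,
    MeasurableSpace.comap (M.X q.1.1 q.2) inferInstance) ⊔
  ⨆ j : {j : ℕ × (Fin M.nIslands × ℕ ⊕ Fin M.nIslands × Fin M.nIslands) // j.1 < t},
    MeasurableSpace.comap (M.B j.1) inferInstance

/-- The σ-algebra generated by the driving Boolean variables of generations `≥ t`. -/
def future (M : IslandModel) (t : ℕ) : MeasurableSpace M.Ω :=
  ⨆ j : {j : ℕ × (Fin M.nIslands × ℕ ⊕ Fin M.nIslands × Fin M.nIslands) // t ≤ j.1},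
    MeasurableSpace.comap (M.B j.1) inferInstance

/-- The defining properties of the island model: `P` is a probability measure; every island
always has a level in `{1, ..., m}` which never decreases (elitism); the driving Boolean
variables are mutually independent, and those of generations `≥ t` are independent of the
entire history up to generation `t`; each variation variable `succ t v i` succeeds with
probability at least `s i` and forces island `v` to reach a level `> i` whenever its level is
`i < m`; each transmission variable of an edge `(u, v)` of the topology succeeds with
probability at least `p` and forces the level of `v` after generation `t + 1` to be at least
the level of `u` at generation `t`. -/
structure Valid (M : IslandModel) : Prop where
  prob : IsProbabilityMeasure M.P
  hμ : 1 ≤ M.nIslands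
  hm : 1 ≤ M.m
  hs : ∀ i, 1 ≤ i → i + 1 ≤ M.m → 0 < M.s i ∧ M.s i ≤ 1
  hp0 : 0 < M.p
  hp1 : M.p ≤ 1
  hXmeas : ∀ t v, Measurable (M.X t v)
  hBmeas : ∀ j, Measurable (M.B j)
  hXrange : ∀ t v ω, 1 ≤ M.X t v ω ∧ M.X t v ω ≤ M.m
  hXmono : ∀ t v ω, M.X t v ω ≤ M.X (t + 1) v ω
  hIndepB : ProbabilityTheory.iIndepFun M.B M.P
  hIndepHist : ∀ t, ProbabilityTheory.Indep (M.future t) (M.hist t) M.P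
  hsuccProb : ∀ t v i, 1 ≤ i → i + 1 ≤ M.m →
    ENNReal.ofReal (M.s i) ≤ M.P {ω | M.succ t v i ω = true}
  htransProb : ∀ t u v, M.edge u v →
    ENNReal.ofReal M.p ≤ M.P {ω | M.trans t u v ω = true}
  hsuccDyn : ∀ t v i ω, M.X t v ω = i → i + 1 ≤ M.m → M.succ t v i ω = true →
    i + 1 ≤ M.X (t + 1) v ω
  htransDyn : ∀ t u v ω, M.edge u v → M.trans t u v ω = true →
    M.X t u ω ≤ M.X (t + 1) v ω

/-- The parallel running time: the first generation at which some island has level `m`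
(as an extended real, `∞` if this never happens). -/
noncomputable def Tpar (M : IslandModel) (ω : M.Ω) : ℝ≥0∞ :=
  ⨅ (t : ℕ) (_ : ∃ v, M.X t v ω = M.m), (t : ℝ≥0∞)

end IslandModel

section FirstTime

variable {Ω : Type*}

noncomputable def firstTime (Q : ℕ → Ω → Prop) (ω : Ω) : ℝ≥0∞ :=
  ⨅ (t : ℕ) (_ : Q t ω), (t : ℝ≥0∞)

variable {Q : ℕ → Ω → Prop} {ω : Ω}

lemma firstTime_le {t : ℕ} (h : Q t ω) : firstTime Q ω ≤ t :=
  iInf₂_le t h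

lemma firstTime_eq_top (h : ∀ t, ¬ Q t ω) : firstTime Q ω = ⊤ := by
  simp [firstTime, h]

lemma firstTime_eq_natCast_iff {τ : ℕ} : firstTime Q ω = τ ↔ Q τ ω ∧ ∀ t < τ, ¬ Q t ω := by
  classical
  have of_min : ∀ τ : ℕ, Q τ ω → (∀ t < τ, ¬ Q t ω) → firstTime Q ω = τ := fun τ hτ hmin =>
    le_antisymm (firstTime_le hτ)
      (le_iInf₂ fun t ht => Nat.cast_le.2 (not_lt.1 fun h => hmin t h ht))
  refine ⟨fun hτ => ?_, fun h => of_min τ h.1 h.2⟩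
  have hex : ∃ t, Q t ω := by
    by_contra! h
    exact ENNReal.natCast_ne_top τ (hτ.symm.trans (firstTime_eq_top h))
  have hfind := of_min _ (Nat.find_spec hex) fun t => Nat.find_min hex
  obtain rfl : τ = Nat.find hex := by exact_mod_cast hτ.symm.trans hfind
  exact ⟨Nat.find_spec hex, fun t => Nat.find_min hex⟩

lemma firstTime_eq_natCast_of_iff {ω' : Ω} {τ : ℕ} (h : ∀ t ≤ τ, Q t ω ↔ Q t ω')
    (hτ : firstTime Q ω = τ) : firstTime Q ω' = τ := by
  rw [firstTime_eq_natCast_iff] at hτ ⊢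
  exact ⟨(h τ le_rfl).1 hτ.1, fun t ht hQ => hτ.2 t ht ((h t ht.le).2 hQ)⟩

lemma exists_firstTime_eq (h : ∃ t, Q t ω) : ∃ τ : ℕ, firstTime Q ω = τ := by
  classical
  exact ⟨Nat.find h, firstTime_eq_natCast_iff.2 ⟨Nat.find_spec h, fun t => Nat.find_min h⟩⟩

lemma measurable_firstTime [MeasurableSpace Ω] (hQ : ∀ t, MeasurableSet {ω | Q t ω}) :
    Measurable (firstTime Q) := by
  classical
  refine Measurable.iInf fun t => ?_
  simp_rw [iInf_eq_if]
  exact Measurable.ite (hQ t) measurable_const measurable_const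

end FirstTime

lemma ENNReal.le_tsum_ite_natCast_lt (a : ℝ≥0∞) :
    a ≤ ∑' t : ℕ, if (t : ℝ≥0∞) < a then 1 else 0 := by
  rcases eq_or_ne a ⊤ with rfl | ha
  · simp
  set n := ⌈a.toReal⌉₊
  calc a ≤ n := by
        rw [← ENNReal.ofReal_toReal ha, ← ENNReal.ofReal_natCast]
        exact ENNReal.ofReal_le_ofReal (Nat.le_ceil _)
    _ = ∑ t ∈ Finset.range n, if (t : ℝ≥0∞) < a then 1 else 0 := by
        rw [Finset.sum_ite_of_true fun t ht => ?_]
        · simp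
        rw [← ENNReal.ofReal_toReal ha, ENNReal.lt_ofReal_iff_toReal_lt (natCast_ne_top t)]
        simpa using Nat.lt_ceil.1 (Finset.mem_range.1 ht)
    _ ≤ _ := ENNReal.sum_le_tsum _

lemma MeasureTheory.lintegral_le_tsum_measure_natCast_lt {Ω : Type*} [MeasurableSpace Ω]
    {μ : Measure Ω} {f : Ω → ℝ≥0∞} (hf : Measurable f) :
    ∫⁻ ω, f ω ∂μ ≤ ∑' t : ℕ, μ {ω | (t : ℝ≥0∞) < f ω} := by
  have hmeas : ∀ t : ℕ, MeasurableSet {ω | (t : ℝ≥0∞) < f ω} := fun t =>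
    hf measurableSet_Ioi
  calc ∫⁻ ω, f ω ∂μ ≤ ∫⁻ ω, ∑' t : ℕ, {ω | (t : ℝ≥0∞) < f ω}.indicator 1 ω ∂μ := by
        refine lintegral_mono fun ω => ?_
        simpa only [Set.indicator_apply, Set.mem_ofPred_eq, Pi.one_apply]
          using ENNReal.le_tsum_ite_natCast_lt (f ω)
    _ = ∑' t : ℕ, μ {ω | (t : ℝ≥0∞) < f ω} := by
        rw [lintegral_tsum fun t => (measurable_one.indicator (hmeas t)).aemeasurable]
        exact tsum_congr fun t => lintegral_indicator_one (hmeas t)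

lemma one_sub_pow_mul_one_add_mul_le_one {s : ℝ} (hs0 : 0 ≤ s) (hs1 : s ≤ 1) (k : ℕ) :
    (1 - s) ^ k * (1 + k * s) ≤ 1 :=
  calc (1 - s) ^ k * (1 + k * s) ≤ (1 - s) ^ k * (1 + s) ^ k :=
        mul_le_mul_of_nonneg_left (one_add_mul_le_pow (by linarith) k) (by positivity)
    _ = (1 - s ^ 2) ^ k := by rw [← mul_pow]; ring
    _ ≤ 1 := pow_le_one₀ (by nlinarith) (by nlinarith)

lemma ENNReal.tsum_ofReal_one_sub_pow_le {s : ℝ} (hs0 : 0 < s) (hs1 : s ≤ 1) {k : ℕ}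
    (hk : 1 ≤ k) :
    ∑' t : ℕ, ENNReal.ofReal (1 - s) ^ (k * t) ≤ 1 + ENNReal.ofReal (1 / (k * s)) := by
  have hks : 0 < (k : ℝ) * s := _root_.mul_pos (by exact_mod_cast hk) hs0
  set c := (1 - s) ^ k
  have hc0 : 0 ≤ c := pow_nonneg (by linarith) k
  have hc1 : c < 1 := pow_lt_one₀ (by linarith) (by linarith) (by omega)
  -- equivalent to `c * (1 + k * s) ≤ 1`
  have hreal : (1 - c)⁻¹ ≤ 1 + 1 / (k * s) := by
    rw [inv_le_iff_one_le_mul₀ (by linarith), one_add_div hks.ne']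
    rw [div_mul_eq_mul_div, le_div_iff₀ hks]
    nlinarith [one_sub_pow_mul_one_add_mul_le_one hs0.le hs1 k]
  calc ∑' t : ℕ, ENNReal.ofReal (1 - s) ^ (k * t)
      = ∑' t : ℕ, (ENNReal.ofReal c) ^ t := by
        rw [ENNReal.ofReal_pow (by linarith : (0 : ℝ) ≤ 1 - s)]
        simp_rw [pow_mul]
    _ = ENNReal.ofReal (1 - c)⁻¹ := by
        rw [ENNReal.tsum_geometric, ENNReal.ofReal_inv_of_pos (by linarith),
          ENNReal.ofReal_sub 1 hc0, ENNReal.ofReal_one]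
    _ ≤ ENNReal.ofReal (1 + 1 / (k * s)) := ENNReal.ofReal_le_ofReal hreal
    _ = 1 + ENNReal.ofReal (1 / (k * s)) := by
        rw [ENNReal.ofReal_add zero_le_one (by positivity), ENNReal.ofReal_one]

lemma ProbabilityTheory.iIndepFun.measure_biInter_preimage_le_pow {Ω ι β : Type*}
    [MeasurableSpace Ω] [MeasurableSpace β] {μ : Measure Ω} {f : ι → Ω → β}
    (hf : iIndepFun f μ) {s : Set β} (hs : MeasurableSet s) (J : Finset ι) {c : ℝ≥0∞}
    (hc : ∀ j ∈ J, μ (f j ⁻¹' s) ≤ c) :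
    μ (⋂ j ∈ J, f j ⁻¹' s) ≤ c ^ J.card := by
  rw [hf.meas_biInter fun j _ => ⟨s, hs, rfl⟩]
  exact Finset.prod_le_pow_card J _ c hc

lemma MeasureTheory.measure_iUnion_inter_le_of_indep {Ω ι : Type*} [Countable ι]
    [mΩ : MeasurableSpace Ω] {μ : Measure Ω} [IsProbabilityMeasure μ]
    {mF mH : ι → MeasurableSpace Ω} {A B : ι → Set Ω} (hA : ∀ p, MeasurableSet[mH p] (A p))
    (hB : ∀ p, MeasurableSet[mF p] (B p)) (hmH : ∀ p, mH p ≤ mΩ)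
    (hind : ∀ p, Indep (mF p) (mH p) μ) (hdisj : Pairwise (Function.onFun Disjoint A)) {r : ℝ≥0∞}
    (hr : ∀ p, (A p).Nonempty → μ (B p) ≤ r) :
    μ (⋃ p, A p ∩ B p) ≤ r :=
  calc μ (⋃ p, A p ∩ B p) ≤ ∑' p, μ (B p ∩ A p) := by
        simp_rw [Set.inter_comm (B _)]; exact measure_iUnion_le _
    _ = ∑' p, μ (B p) * μ (A p) :=
        tsum_congr fun p => (Indep_iff _ _ _).1 (hind p) _ _ (hB p) (hA p)
    _ ≤ ∑' p, r * μ (A p) := by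
        refine ENNReal.tsum_le_tsum fun p => ?_
        rcases (A p).eq_empty_or_nonempty with h | h
        · simp [h]
        · exact mul_le_mul_left (hr p h) _
    _ = r * μ (⋃ p, A p) := by
        rw [ENNReal.tsum_mul_left, measure_iUnion hdisj fun p => hmH p _ (hA p)]
    _ ≤ r := mul_le_of_le_one_right' prob_le_one

namespace IslandModel

variable (M : IslandModel)

def SomeAtLeast (i t : ℕ) (ω : M.Ω) : Prop :=
  ∃ v, i ≤ M.X t v ω

def ManyAtLeast (i k t : ℕ) (ω : M.Ω) : Prop :=
  k ≤ Nat.card {v : Fin M.nIslands // i ≤ M.X t v ω}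

def trajectory (τ : ℕ) (ω : M.Ω) : Fin (τ + 1) → Fin M.nIslands → ℕ :=
  fun t v => M.X t v ω

variable {M}

lemma measurable_trajectory (τ : ℕ) : Measurable[M.hist τ] (M.trajectory τ) := by
  refine @measurable_pi_lambda _ _ _ (M.hist τ) _ _ fun t =>
    @measurable_pi_lambda _ _ _ (M.hist τ) _ _ fun v => ?_
  refine Measurable.of_comap_le (le_trans ?_ le_sup_left)
  exact le_iSup (fun q : {q : ℕ // q ≤ τ} × Fin M.nIslands =>
    MeasurableSpace.comap (M.X q.1.1 q.2) inferInstance) (⟨t, Nat.lt_succ_iff.1 t.2⟩, v)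

lemma measurableSet_hist {τ : ℕ} {E : Set M.Ω}
    (hE : ∀ ω ω', (∀ t ≤ τ, ∀ v, M.X t v ω = M.X t v ω') → ω ∈ E → ω' ∈ E) :
    MeasurableSet[M.hist τ] E := by
  have : E = M.trajectory τ ⁻¹' (M.trajectory τ '' E) := by
    refine (Set.subset_preimage_image _ _).antisymm fun ω ⟨ω', hω', heq⟩ => hE ω' ω ?_ hω'
    exact fun t ht v => congr_fun (congr_fun heq ⟨t, Nat.lt_succ_of_le ht⟩) v
  rw [this]
  exact measurable_trajectory τ (MeasurableSet.of_discrete : MeasurableSet (M.trajectory τ '' E))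

lemma measurableSet_future_succ_eq {τ t : ℕ} (h : τ ≤ t) (v : Fin M.nIslands) (i : ℕ)
    (b : Bool) : MeasurableSet[M.future τ] {ω | M.succ t v i ω = b} :=
  le_iSup (fun j : {j : ℕ × (Fin M.nIslands × ℕ ⊕ Fin M.nIslands × Fin M.nIslands) //
      τ ≤ j.1} => MeasurableSpace.comap (M.B j.1) inferInstance) ⟨(t, .inl (v, i)), h⟩ _
    ⟨{b}, trivial, rfl⟩

namespace Valid

variable (hM : M.Valid)
include hM

lemma hist_le (τ : ℕ) : M.hist τ ≤ M.mΩ :=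
  sup_le (iSup_le fun _ => (hM.hXmeas _ _).comap_le) (iSup_le fun _ => (hM.hBmeas _).comap_le)

lemma measurableSet_levels (t : ℕ) (R : (Fin M.nIslands → ℕ) → Prop) :
    MeasurableSet {ω | R fun v => M.X t v ω} :=
  (measurable_pi_lambda _ fun v => hM.hXmeas t v) MeasurableSet.of_discrete

lemma measurable_firstTime_someAtLeast (i : ℕ) : Measurable (firstTime (M.SomeAtLeast i)) :=
  measurable_firstTime fun t => hM.measurableSet_levels t fun x => ∃ v, i ≤ x v

lemma measurable_firstTime_manyAtLeast (i k : ℕ) :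
    Measurable (firstTime (M.ManyAtLeast i k)) :=
  measurable_firstTime fun t => hM.measurableSet_levels t fun x => k ≤ Nat.card {v // i ≤ x v}

lemma measure_succ_eq_false_le (t : ℕ) (v : Fin M.nIslands) {i : ℕ} (hi1 : 1 ≤ i)
    (him : i + 1 ≤ M.m) :
    M.P {ω | M.succ t v i ω = false} ≤ ENNReal.ofReal (1 - M.s i) := by
  have := hM.prob
  have hmeas : MeasurableSet {ω | M.succ t v i ω = true} :=
    hM.hBmeas (t, .inl (v, i)) (measurableSet_singleton true)
  have hcompl : {ω | M.succ t v i ω = false} = {ω | M.succ t v i ω = true}ᶜ := by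
    ext ω; simp
  rw [hcompl, prob_compl_eq_one_sub hmeas, ENNReal.ofReal_sub 1 (hM.hs i hi1 him).1.le,
    ENNReal.ofReal_one]
  exact tsub_le_tsub_left (hM.hsuccProb t v i hi1 him) 1

lemma succ_eq_false_of_lt_firstTime {i : ℕ} (him : i + 1 ≤ M.m) {ω : M.Ω} {τ t : ℕ}
    (hL : ((τ + t : ℕ) : ℝ≥0∞) < firstTime (M.SomeAtLeast (i + 1)) ω) {v : Fin M.nIslands}
    (hv : i ≤ M.X τ v ω) {t' : ℕ} (ht' : t' ∈ Finset.Ico τ (τ + t)) :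
    M.succ t' v i ω = false := by
  rw [Finset.mem_Ico] at ht'
  have below : ∀ t'' ≤ τ + t, M.X t'' v ω ≤ i := fun t'' h => by
    by_contra! hlt
    exact (firstTime_le ⟨v, hlt⟩).trans (Nat.cast_le.2 h) |>.not_gt hL
  have hX : M.X t' v ω = i := le_antisymm (below t' (by omega))
    (hv.trans (monotone_nat_of_le_succ (fun t => hM.hXmono t v ω) ht'.1))
  by_contra hsucc
  have := hM.hsuccDyn t' v i ω hX him (Bool.not_eq_false _ ▸ hsucc)
  have := below (t' + 1) (by omega)
  omega

lemma measure_lt_sub_firstTime_le {i : ℕ} (hi1 : 1 ≤ i) (him : i + 1 ≤ M.m) (k t : ℕ) :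
    M.P {ω | (t : ℝ≥0∞) <
        firstTime (M.SomeAtLeast (i + 1)) ω - firstTime (M.ManyAtLeast i k) ω} ≤
      ENNReal.ofReal (1 - M.s i) ^ (k * t) := by
  have := hM.prob
  -- `A (τ, S)`: `T(k) = τ` and `S` is the set of islands at level `≥ i` at `τ`, an event of the
  -- history at `τ`; `B (τ, S)`: every island of `S` fails in the next `t` generations.
  set A : ℕ × Finset (Fin M.nIslands) → Set M.Ω := fun p =>
    {ω | firstTime (M.ManyAtLeast i k) ω = p.1 ∧
      Finset.univ.filter (fun v => i ≤ M.X p.1 v ω) = p.2}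
  set B : ℕ × Finset (Fin M.nIslands) → Set M.Ω := fun p =>
    ⋂ q ∈ p.2 ×ˢ Finset.Ico p.1 (p.1 + t), {ω | M.succ q.2 q.1 i ω = false}
  have hsub : {ω | (t : ℝ≥0∞) <
      firstTime (M.SomeAtLeast (i + 1)) ω - firstTime (M.ManyAtLeast i k) ω} ⊆
        ⋃ p, A p ∩ B p := by
    rintro ω (hω : (t : ℝ≥0∞) < _)
    have hT : ∃ t, M.ManyAtLeast i k t ω := by
      by_contra! h
      simp [firstTime_eq_top h] at hω
    obtain ⟨τ, hτ⟩ := exists_firstTime_eq hT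
    rw [hτ, lt_tsub_iff_left] at hω
    refine Set.mem_iUnion.2 ⟨(τ, Finset.univ.filter fun v => i ≤ M.X τ v ω), ⟨hτ, rfl⟩,
      Set.mem_iInter₂.2 fun q hq => ?_⟩
    rw [Finset.mem_product, Finset.mem_filter] at hq
    exact hM.succ_eq_false_of_lt_firstTime him (by exact_mod_cast hω) hq.1.2 hq.2
  have hA : ∀ p, MeasurableSet[M.hist p.1] (A p) := fun p => by
    refine measurableSet_hist fun ω ω' h ⟨hTω, hSω⟩ => ⟨?_, ?_⟩
    · exact firstTime_eq_natCast_of_iff (fun t ht => by simp only [ManyAtLeast, h t ht]) hTω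
    · simpa only [h p.1 le_rfl] using hSω
  have hB : ∀ p, MeasurableSet[M.future p.1] (B p) := fun p =>
    Finset.measurableSet_biInter _ fun q hq =>
      measurableSet_future_succ_eq (Finset.mem_Ico.1 (Finset.mem_product.1 hq).2).1 _ _ _
  have hdisj : Pairwise (Function.onFun Disjoint A) := by
    refine fun p q hpq => Set.disjoint_left.2 fun ω ⟨hp1, hp2⟩ ⟨hq1, hq2⟩ => hpq ?_
    obtain h1 : p.1 = q.1 := by exact_mod_cast hp1.symm.trans hq1
    exact Prod.ext h1 (hp2.symm.trans (by rw [h1]; exact hq2))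
  refine (measure_mono hsub).trans (measure_iUnion_inter_le_of_indep hA hB
    (fun p => hM.hist_le p.1) (fun p => hM.hIndepHist p.1) hdisj fun p ⟨ω, hT, hS⟩ => ?_)
  have hk : k ≤ p.2.card := by
    rw [← hS, ← Fintype.card_subtype, ← Nat.card_eq_fintype_card]
    exact (firstTime_eq_natCast_iff.1 hT).1
  have hinj : Function.Injective fun q : Fin M.nIslands × ℕ =>
      ((q.2, .inl (q.1, i)) : ℕ × (Fin M.nIslands × ℕ ⊕ Fin M.nIslands × Fin M.nIslands)) :=
    fun q q' h => by simp_all [Prod.ext_iff]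
  calc M.P (B p) ≤ ENNReal.ofReal (1 - M.s i) ^ (p.2 ×ˢ Finset.Ico p.1 (p.1 + t)).card :=
        (hM.hIndepB.precomp hinj).measure_biInter_preimage_le_pow (measurableSet_singleton false)
          _ fun q _ => hM.measure_succ_eq_false_le q.2 q.1 hi1 him
    _ ≤ ENNReal.ofReal (1 - M.s i) ^ (k * t) := by
        refine pow_le_pow_of_le_one zero_le
          (ENNReal.ofReal_le_one.2 (by linarith [(hM.hs i hi1 him).1])) ?_
        simpa using Nat.mul_le_mul_right t hk

lemma lintegral_sub_firstTime_le {i : ℕ} (hi1 : 1 ≤ i) (him : i + 1 ≤ M.m) {k : ℕ}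
    (hk : 1 ≤ k) :
    ∫⁻ ω, (firstTime (M.SomeAtLeast (i + 1)) ω - firstTime (M.ManyAtLeast i k) ω) ∂M.P ≤
      1 + ENNReal.ofReal (1 / (k * M.s i)) :=
  calc _ ≤ ∑' t : ℕ, M.P {ω | (t : ℝ≥0∞) <
          firstTime (M.SomeAtLeast (i + 1)) ω - firstTime (M.ManyAtLeast i k) ω} :=
        lintegral_le_tsum_measure_natCast_lt <|
          (hM.measurable_firstTime_someAtLeast _).sub (hM.measurable_firstTime_manyAtLeast i k)
    _ ≤ ∑' t : ℕ, ENNReal.ofReal (1 - M.s i) ^ (k * t) :=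
        ENNReal.tsum_le_tsum fun t => hM.measure_lt_sub_firstTime_le hi1 him k t
    _ ≤ 1 + ENNReal.ofReal (1 / (k * M.s i)) :=
        ENNReal.tsum_ofReal_one_sub_pow_le (hM.hs i hi1 him).1 (hM.hs i hi1 him).2 hk

end Valid

end IslandModel

theorem expected_time_on_level_general (M : IslandModel) (hM : M.Valid)
    (i : ℕ) (hi1 : 1 ≤ i) (him : i + 1 ≤ M.m)
    (k : ℕ) (hk1 : 1 ≤ k) :
    ∫⁻ ω, ((⨅ (t : ℕ) (_ : ∃ v, i + 1 ≤ M.X t v ω), (t : ℝ≥0∞)) -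
        (⨅ (t : ℕ) (_ : ∃ v, i ≤ M.X t v ω), (t : ℝ≥0∞))) ∂M.P ≤
      (∫⁻ ω, ((⨅ (t : ℕ) (_ : k ≤ Nat.card {v : Fin M.nIslands // i ≤ M.X t v ω}),
          (t : ℝ≥0∞)) -
        (⨅ (t : ℕ) (_ : ∃ v, i ≤ M.X t v ω), (t : ℝ≥0∞))) ∂M.P)
        + 1 + ENNReal.ofReal (1 / (k * M.s i)) := by
  change ∫⁻ ω, (firstTime (M.SomeAtLeast (i + 1)) ω - firstTime (M.SomeAtLeast i) ω) ∂M.P ≤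
    (∫⁻ ω, (firstTime (M.ManyAtLeast i k) ω - firstTime (M.SomeAtLeast i) ω) ∂M.P) + 1 +
      ENNReal.ofReal (1 / (k * M.s i))
  calc _ ≤ ∫⁻ ω, ((firstTime (M.ManyAtLeast i k) ω - firstTime (M.SomeAtLeast i) ω) +
          (firstTime (M.SomeAtLeast (i + 1)) ω - firstTime (M.ManyAtLeast i k) ω)) ∂M.P :=
        lintegral_mono fun ω => tsub_le_tsub_add_tsub.trans_eq (add_comm _ _)
    _ = (∫⁻ ω, (firstTime (M.ManyAtLeast i k) ω - firstTime (M.SomeAtLeast i) ω) ∂M.P) +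
          ∫⁻ ω, (firstTime (M.SomeAtLeast (i + 1)) ω - firstTime (M.ManyAtLeast i k) ω) ∂M.P :=
        lintegral_add_left ((hM.measurable_firstTime_manyAtLeast i k).sub
          (hM.measurable_firstTime_someAtLeast i)) _
    _ ≤ _ := by
        rw [add_assoc]
        exact add_le_add_right (hM.lintegral_sub_firstTime_le hi1 him hk1) _

/-- **Expected time on one fitness level** (Lemma 4 in the paper). Fix a level `1 ≤ i ≤ m - 1`
and `1 ≤ k ≤ μ`. Let `G` be the first generation at which some island has level `≥ i`, let
`T(k)` be the number of generations after `G` until at least `k` islands have level `≥ i`, and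
let `L` be the number of generations after `G` until some island has level `≥ i + 1`. Then
`E[L] ≤ E[T(k)] + 1 + 1 / (k · s i)`. -/
theorem expected_time_on_level (M : IslandModel) (hM : M.Valid)
    (i : ℕ) (hi1 : 1 ≤ i) (him : i + 1 ≤ M.m)
    (k : ℕ) (hk1 : 1 ≤ k) (hkμ : k ≤ M.nIslands) :
    ∫⁻ ω, ((⨅ (t : ℕ) (_ : ∃ v, i + 1 ≤ M.X t v ω), (t : ℝ≥0∞)) -
        (⨅ (t : ℕ) (_ : ∃ v, i ≤ M.X t v ω), (t : ℝ≥0∞))) ∂M.P ≤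
      (∫⁻ ω, ((⨅ (t : ℕ) (_ : k ≤ Nat.card {v : Fin M.nIslands // i ≤ M.X t v ω}),
          (t : ℝ≥0∞)) -
        (⨅ (t : ℕ) (_ : ∃ v, i ≤ M.X t v ω), (t : ℝ≥0∞))) ∂M.P)
        + 1 + ENNReal.ofReal (1 / (k * M.s i)) :=
  expected_time_on_level_general M hM i hi1 him k hk1
end

section
/- Consider the randomized information propagation process with transmission probability p on a finite undirected graph G starting at vertex v*. For i ∈ ℕ, let V_i be the set of vertices at graph distance exactly i from v*, and for k ≥ 1 let S_k := Σ_{i=1}^{k} |V_i|. Then for every k ≥ 1 and every real λ ≥ 2, the probability that after ⌈λk/p⌉ rounds some vertex at graph distance at most k from v* is still uninformed is at most S_k · exp(-((λ-1)²/(2λ)) · k), which in turn is at most S_k · exp(-λk/8). -/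
open MeasureTheory ProbabilityTheory ENNReal

/-- The informed vertices of the randomized information propagation process on the directed
graph with edge relation `E`, driven by the coins `coin` and started at `v0`: initially exactly
`v0` is informed, informed vertices stay informed, and in each round every informed vertex `u`
informs each out-neighbour `v` whenever the corresponding coin `coin t u v` comes up `true`. -/
def informed {V Ω : Type} (E : V → V → Prop) (coin : ℕ → V → V → Ω → Bool) (v0 : V) :
    ℕ → V → Ω → Prop
  | 0, v, _ => v = v0
  | t + 1, v, ω => informed E coin v0 t v ω ∨
      ∃ u, E u v ∧ informed E coin v0 t u ω ∧ coin t u v ω = true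

/-- The coins driving the propagation process with transmission probability `p`: measurable,
mutually independent, and each one `true` with probability exactly `p`. -/
def PropagationCoins {V Ω : Type} [MeasurableSpace Ω] (coin : ℕ → V → V → Ω → Bool)
    (P : MeasureTheory.Measure Ω) (p : ℝ) : Prop :=
  (∀ t u v, Measurable (coin t u v)) ∧
  ProbabilityTheory.iIndepFun
    (fun j : ℕ × V × V => coin j.1 j.2.1 j.2.2) P ∧
  ∀ t u v, P {ω | coin t u v ω = true} = ENNReal.ofReal p

open scoped unitInterval

/-!
Fix a vertex `v` at distance `d ≤ k` from `v0` and a shortest walk `v0 = x₀, x₁, …, x_d = v`.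
Couple the process with a walker on this walk: in round `t` the walker, standing at `xₙ`, reads only
the coin of the edge `(xₙ, xₙ₊₁)` and steps forward when it is `true`. All of `x₀, …, xₙ` are then
informed, and since every round reads a coin independent of the walker's past, its position after
`T` rounds has law `Bin(T, p)`. Hence `v` is still uninformed after `T ≥ λk/p` rounds with
probability at most `P(Bin(T, p) < d) ≤ λᵈ (p/λ + 1 - p)ᵀ ≤ exp(-((λ-1)²/(2λ)) k)` (Chernoff),
and a union bound over the `S_k` vertices at distance between `1` and `k` finishes the proof.
-/

lemma Real.log_le_sub_inv_div_two {x : ℝ} (hx : 1 ≤ x) : Real.log x ≤ (x - x⁻¹) / 2 := by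
  have h := Real.self_le_sinh_iff.2 (Real.log_nonneg hx)
  rwa [Real.sinh_eq, Real.exp_neg, Real.exp_log (by linarith)] at h

lemma pow_mul_pow_le_exp {p lam : ℝ} {k T : ℕ} (hp0 : 0 ≤ p) (hp1 : p ≤ 1) (hlam : 1 ≤ lam)
    (hT : lam * k ≤ p * T) :
    lam ^ k * (p / lam + (1 - p)) ^ T ≤ Real.exp (-((lam - 1) ^ 2 / (2 * lam)) * k) := by
  have hlam0 : 0 < lam := by linarith
  have hbase : p / lam + (1 - p) ≤ Real.exp (-(p * (1 - lam⁻¹))) := by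
    linarith [Real.add_one_le_exp (-(p * (1 - lam⁻¹))), div_eq_mul_inv p lam]
  have hdecay : (p / lam + (1 - p)) ^ T ≤ Real.exp (-((lam - 1) * k)) :=
    calc (p / lam + (1 - p)) ^ T ≤ Real.exp (-(p * (1 - lam⁻¹))) ^ T := by
          have : 0 ≤ p / lam + (1 - p) := by positivity
          gcongr
      _ = Real.exp (-((1 - lam⁻¹) * (p * T))) := by rw [← Real.exp_nat_mul]; ring_nf
      _ ≤ Real.exp (-((1 - lam⁻¹) * (lam * k))) := by
          gcongr
          exact sub_nonneg.2 (inv_le_one_of_one_le₀ hlam)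
      _ = Real.exp (-((lam - 1) * k)) := by field_simp
  have hgrowth : lam ^ k ≤ Real.exp (((lam - 1) - (lam - 1) ^ 2 / (2 * lam)) * k) := by
    rw [← Real.exp_log (pow_pos hlam0 k), Real.log_pow, mul_comm]
    gcongr
    have : (lam - 1) - (lam - 1) ^ 2 / (2 * lam) = (lam - lam⁻¹) / 2 := by field_simp; ring
    exact this ▸ Real.log_le_sub_inv_div_two hlam
  calc lam ^ k * (p / lam + (1 - p)) ^ T
      ≤ Real.exp (((lam - 1) - (lam - 1) ^ 2 / (2 * lam)) * k) * Real.exp (-((lam - 1) * k)) := by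
        gcongr
    _ = Real.exp (-((lam - 1) ^ 2 / (2 * lam)) * k) := by rw [← Real.exp_add]; ring_nf

lemma div_eight_le_sub_one_sq_div {lam : ℝ} (hlam : 2 ≤ lam) :
    lam / 8 ≤ (lam - 1) ^ 2 / (2 * lam) := by
  rw [div_le_div_iff₀ (by norm_num) (by linarith)]
  nlinarith

namespace ProbabilityTheory

lemma binomial_real_Iio_le (T d : ℕ) (p : I) {z : ℝ} (hz : 1 ≤ z) :
    (binomial T p).real (Set.Iio d) ≤ z ^ d * (p / z + (1 - p)) ^ T := by
  have hz0 : 0 < z := by linarith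
  have hmarkov : ∀ j, (Set.Iio d).indicator (1 : ℕ → ℝ) j ≤ z ^ d * z⁻¹ ^ j := by
    intro j
    by_cases hj : j ∈ Set.Iio d
    · rw [Set.indicator_of_mem hj, Pi.one_apply, inv_pow, ← div_eq_mul_inv,
        one_le_div (by positivity)]
      exact pow_le_pow_right₀ hz (Set.mem_Iio.1 hj).le
    · rw [Set.indicator_of_notMem hj]
      positivity
  calc (binomial T p).real (Set.Iio d)
      = ∫ j, (Set.Iio d).indicator 1 j ∂binomial T p :=
        (integral_indicator_one measurableSet_Iio).symm
    _ ≤ ∫ j, z ^ d * z⁻¹ ^ j ∂binomial T p :=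
        integral_mono (integrable_binomial _) (integrable_binomial _) hmarkov
    _ = z ^ d * (p / z + (1 - p)) ^ T := by
        rw [integral_binomial, add_pow, Finset.mul_sum, Nat.range_succ_eq_Iic]
        refine Finset.sum_congr rfl fun j _ => ?_
        simp only [smul_eq_mul, div_eq_mul_inv, mul_pow]
        ring

lemma binomial_real_Iio_le_exp {p : I} {lam : ℝ} {d k T : ℕ} (hlam : 1 ≤ lam) (hd : d ≤ k)
    (hT : lam * k ≤ p * T) :
    (binomial T p).real (Set.Iio d) ≤ Real.exp (-((lam - 1) ^ 2 / (2 * lam)) * k) :=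
  calc (binomial T p).real (Set.Iio d) ≤ lam ^ d * (p / lam + (1 - p)) ^ T :=
        binomial_real_Iio_le T d p hlam
    _ ≤ lam ^ k * (p / lam + (1 - p)) ^ T :=
        mul_le_mul_of_nonneg_right (pow_le_pow_right₀ hlam hd)
          (pow_nonneg (add_nonneg (div_nonneg p.2.1 (by linarith)) (sub_nonneg.2 p.2.2)) T)
    _ ≤ Real.exp (-((lam - 1) ^ 2 / (2 * lam)) * k) := pow_mul_pow_le_exp p.2.1 p.2.2 hlam hT

end ProbabilityTheory

def coinWalk (c : ℕ → ℕ → Bool) : ℕ → ℕ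
  | 0 => 0
  | t + 1 => coinWalk c t + (c t (coinWalk c t)).toNat

lemma coinWalk_le (c : ℕ → ℕ → Bool) (t : ℕ) : coinWalk c t ≤ t := by
  induction t with
  | zero => rfl
  | succ t ih => grind [coinWalk, Bool.toNat_le]

lemma coinWalk_congr {c c' : ℕ → ℕ → Bool} {t : ℕ} (h : ∀ s < t, ∀ j ≤ s, c s j = c' s j) :
    coinWalk c t = coinWalk c' t := by
  induction t with
  | zero => rfl
  | succ t ih =>
    have ht : coinWalk c t = coinWalk c' t := ih fun s hs j hj => h s (by omega) j hj
    rw [coinWalk, coinWalk, ht, h t (by omega) _ (ht ▸ coinWalk_le c t)]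

section PathProgress

variable {V Ω : Type}

def pathProgress (coin : ℕ → V → V → Ω → Bool) (x : ℕ → V) (t : ℕ) (ω : Ω) : ℕ :=
  coinWalk (fun s j => coin s (x j) (x (j + 1)) ω) t

variable (coin : ℕ → V → V → Ω → Bool) (x : ℕ → V)

lemma pathProgress_zero (ω : Ω) : pathProgress coin x 0 ω = 0 := rfl

lemma pathProgress_succ (t : ℕ) (ω : Ω) :
    pathProgress coin x (t + 1) ω = pathProgress coin x t ω +
      (coin t (x (pathProgress coin x t ω)) (x (pathProgress coin x t ω + 1)) ω).toNat := rfl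

lemma pathProgress_succ_preimage_zero (t : ℕ) :
    pathProgress coin x (t + 1) ⁻¹' {0} =
      pathProgress coin x t ⁻¹' {0} ∩ {ω | coin t (x 0) (x 1) ω = false} := by
  ext ω
  simp only [Set.mem_preimage, Set.mem_singleton_iff, pathProgress_succ, Set.mem_inter_iff,
    Set.mem_ofPred_eq]
  generalize pathProgress coin x t ω = n
  cases h : coin t (x n) (x (n + 1)) ω <;> grind

lemma pathProgress_succ_preimage_succ (t m : ℕ) :
    pathProgress coin x (t + 1) ⁻¹' {m + 1} =
      pathProgress coin x t ⁻¹' {m + 1} ∩ {ω | coin t (x (m + 1)) (x (m + 2)) ω = false} ∪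
        pathProgress coin x t ⁻¹' {m} ∩ {ω | coin t (x m) (x (m + 1)) ω = true} := by
  ext ω
  simp only [Set.mem_preimage, Set.mem_singleton_iff, pathProgress_succ, Set.mem_inter_iff,
    Set.mem_ofPred_eq, Set.mem_union]
  generalize pathProgress coin x t ω = n
  cases h : coin t (x n) (x (n + 1)) ω <;> grind

lemma informed_of_le_pathProgress {E : V → V → Prop} {v0 : V} (hx0 : x 0 = v0)
    (hx : ∀ j, x j = x (j + 1) ∨ E (x j) (x (j + 1))) (ω : Ω) :
    ∀ t, ∀ j ≤ pathProgress coin x t ω, informed E coin v0 t (x j) ω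
  | 0, j, hj => by
    obtain rfl : j = 0 := Nat.le_zero.1 (pathProgress_zero coin x ω ▸ hj)
    exact hx0
  | t + 1, j, hj => by
    have ih := informed_of_le_pathProgress hx0 hx ω t
    rw [pathProgress_succ] at hj
    rcases Nat.lt_or_ge (pathProgress coin x t ω) j with hlt | hle
    · set n := pathProgress coin x t ω
      cases hc : coin t (x n) (x (n + 1)) ω
      · simp only [hc, Bool.toNat_false, add_zero] at hj
        omega
      · simp only [hc, Bool.toNat_true] at hj
        obtain rfl : j = n + 1 := by omega
        rcases hx n with heq | hE
        · exact Or.inl (heq ▸ ih n le_rfl)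
        · exact Or.inr ⟨x n, hE, ih n le_rfl, hc⟩
    · exact Or.inl (ih j hle)

lemma exists_pathProgress_eq_comp (t : ℕ) : ∃ (S : Finset (ℕ × V × V)) (φ : (S → Bool) → ℕ),
    (∀ i ∈ S, i.1 < t) ∧
      pathProgress coin x t = fun ω => φ fun i => coin i.1.1 i.1.2.1 i.1.2.2 ω := by
  classical
  let S := (Finset.range t ×ˢ Finset.range t).image fun sj => (sj.1, x sj.2, x (sj.2 + 1))
  have hS : ∀ s < t, ∀ j ≤ s, (s, x j, x (j + 1)) ∈ S := fun s hs j hj =>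
    Finset.mem_image.2 ⟨(s, j), by simp only [Finset.mem_product, Finset.mem_range]; omega, rfl⟩
  refine ⟨S, fun y => coinWalk (fun s j =>
    if h : (s, x j, x (j + 1)) ∈ S then y ⟨_, h⟩ else false) t, ?_, ?_⟩
  · simp only [S, Finset.mem_image, Finset.mem_product, Finset.mem_range]
    rintro _ ⟨⟨s, j⟩, ⟨hs, -⟩, rfl⟩
    exact hs
  · funext ω
    exact coinWalk_congr fun s hs j hj => by simp [hS s hs j hj]

variable [MeasurableSpace Ω]

lemma measurable_pathProgress (hm : ∀ t u v, Measurable (coin t u v)) (t : ℕ) :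
    Measurable (pathProgress coin x t) := by
  obtain ⟨S, φ, -, h⟩ := exists_pathProgress_eq_comp coin x t
  rw [h]
  exact (measurable_of_countable φ).comp (measurable_pi_lambda _ fun i => hm _ _ _)

lemma indepFun_pathProgress_coin {P : Measure Ω} {p : ℝ} (hcoin : PropagationCoins coin P p)
    (t : ℕ) (a b : V) : IndepFun (pathProgress coin x t) (coin t a b) P := by
  obtain ⟨S, φ, hS, h⟩ := exists_pathProgress_eq_comp coin x t
  have hdisj : Disjoint S {(t, a, b)} :=
    Finset.disjoint_singleton_right.2 fun hmem => lt_irrefl t (hS _ hmem)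
  rw [h]
  exact (hcoin.2.1.indepFun_finset S _ hdisj fun i => hcoin.1 _ _ _).comp
    (measurable_of_countable φ)
    (measurable_of_countable fun y => y ⟨_, Finset.mem_singleton_self _⟩)

end PathProgress

lemma choose_succ_succ_mul_pow_mul_pow (t m : ℕ) (p q : ℝ) :
    ((t + 1).choose (m + 1) : ℝ) * p ^ (m + 1) * q ^ (t + 1 - (m + 1)) =
      t.choose (m + 1) * p ^ (m + 1) * q ^ (t - (m + 1)) * q +
        t.choose m * p ^ m * q ^ (t - m) * p := by
  rw [Nat.choose_succ_succ', Nat.add_sub_add_right]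
  rcases Nat.lt_or_ge m t with h | h
  · rw [show t - m = t - (m + 1) + 1 by omega]
    push_cast
    ring
  · rw [Nat.choose_eq_zero_of_lt (by omega : t < m + 1), Nat.sub_eq_zero_of_le h,
      Nat.sub_eq_zero_of_le (by omega : t ≤ m + 1)]
    push_cast
    ring

lemma SimpleGraph.Walk.getVert_succ_eq_or_adj {V : Type*} {G : SimpleGraph V} {u v : V}
    (w : G.Walk u v) (j : ℕ) :
    w.getVert j = w.getVert (j + 1) ∨ G.Adj (w.getVert j) (w.getVert (j + 1)) := by
  rcases Nat.lt_or_ge j w.length with h | h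
  · exact Or.inr (w.adj_getVert_succ h)
  · exact Or.inl ((w.getVert_of_length_le h).trans (w.getVert_of_length_le (by omega)).symm)

lemma MeasureTheory.measureReal_biUnion_finset_le_card_mul {ι Ω : Type*} [MeasurableSpace Ω]
    {P : Measure Ω} [IsFiniteMeasure P] (A : Finset ι) (E : ι → Set Ω) {c : ℝ}
    (h : ∀ i ∈ A, P.real (E i) ≤ c) : P.real (⋃ i ∈ A, E i) ≤ A.card * c :=
  calc P.real (⋃ i ∈ A, E i) ≤ ∑ i ∈ A, P.real (E i) := measureReal_biUnion_finset_le _ _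
    _ ≤ A.card * c := by simpa using Finset.sum_le_sum h

namespace PropagationCoins

variable {V Ω : Type} [MeasurableSpace Ω] {coin : ℕ → V → V → Ω → Bool} {P : Measure Ω} {p : I}

lemma measureReal_eq_true (hcoin : PropagationCoins coin P p) (t : ℕ) (a b : V) :
    P.real {ω | coin t a b ω = true} = p := by
  rw [measureReal_def, hcoin.2.2, ENNReal.toReal_ofReal p.2.1]

lemma measureReal_pathProgress_inter (hcoin : PropagationCoins coin P p) (x : ℕ → V)
    (t n : ℕ) (a b : V) (β : Bool) :
    P.real (pathProgress coin x t ⁻¹' {n} ∩ {ω | coin t a b ω = β}) =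
      P.real (pathProgress coin x t ⁻¹' {n}) * P.real {ω | coin t a b ω = β} := by
  simp only [measureReal_def, ← ENNReal.toReal_mul]
  congr 1
  exact (indepFun_pathProgress_coin coin x hcoin t a b).measure_inter_preimage_eq_mul _ _
    (measurableSet_singleton n) (measurableSet_singleton β)

variable [IsProbabilityMeasure P]

lemma measureReal_eq_false (hcoin : PropagationCoins coin P p) (t : ℕ) (a b : V) :
    P.real {ω | coin t a b ω = false} = 1 - p := by
  have hcompl : {ω | coin t a b ω = false} = {ω | coin t a b ω = true}ᶜ := by ext; simp
  rw [hcompl, probReal_compl_eq_one_sub (show MeasurableSet {ω | coin t a b ω = true} from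
    hcoin.1 t a b (measurableSet_singleton true)), hcoin.measureReal_eq_true]

lemma measureReal_pathProgress_eq (hcoin : PropagationCoins coin P p) (x : ℕ → V) (t j : ℕ) :
    P.real (pathProgress coin x t ⁻¹' {j}) = t.choose j * p ^ j * (1 - p) ^ (t - j) := by
  induction t generalizing j with
  | zero => rcases j with _ | m <;> simp [Set.preimage, pathProgress_zero]
  | succ t ih =>
    rcases j with _ | m
    · rw [pathProgress_succ_preimage_zero, hcoin.measureReal_pathProgress_inter,
        hcoin.measureReal_eq_false, ih]
      simp only [Nat.choose_zero_right, pow_zero, Nat.sub_zero, pow_succ]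
      ring
    · have hmeas : MeasurableSet
          (pathProgress coin x t ⁻¹' {m} ∩ {ω | coin t (x m) (x (m + 1)) ω = true}) :=
        (measurable_pathProgress coin x hcoin.1 t (measurableSet_singleton m)).inter
          (hcoin.1 t (x m) (x (m + 1)) (measurableSet_singleton true))
      rw [pathProgress_succ_preimage_succ, measureReal_union ?_ hmeas,
        hcoin.measureReal_pathProgress_inter, hcoin.measureReal_pathProgress_inter,
        hcoin.measureReal_eq_false, hcoin.measureReal_eq_true, ih, ih,
        choose_succ_succ_mul_pow_mul_pow]
      exact Set.disjoint_left.2 fun ω h1 h2 => by simp_all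

theorem hasLaw_pathProgress (hcoin : PropagationCoins coin P p) (x : ℕ → V) (t : ℕ) :
    HasLaw (pathProgress coin x t) (binomial t p) P where
  aemeasurable := (measurable_pathProgress coin x hcoin.1 t).aemeasurable
  map_eq := Measure.ext_iff_singleton.2 fun j => by
    rw [Measure.map_apply (measurable_pathProgress coin x hcoin.1 t) (measurableSet_singleton j),
      binomial_singleton, ← hcoin.measureReal_pathProgress_eq, ofReal_measureReal]

theorem measureReal_not_informed_le (hcoin : PropagationCoins coin P p) {G : SimpleGraph V}
    {v0 v : V} (w : G.Walk v0 v) (T : ℕ) :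
    P.real {ω | ¬ informed G.Adj coin v0 T v ω} ≤ (binomial T p).real (Set.Iio w.length) :=
  calc P.real {ω | ¬ informed G.Adj coin v0 T v ω}
      ≤ P.real {ω | pathProgress coin w.getVert T ω < w.length} := by
        refine measureReal_mono fun ω hω => ?_
        by_contra hle
        exact hω (w.getVert_length ▸ informed_of_le_pathProgress coin w.getVert w.getVert_zero
          w.getVert_succ_eq_or_adj ω T _ (not_lt.1 hle))
    _ = (binomial T p).real (Set.Iio w.length) :=
        (hcoin.hasLaw_pathProgress w.getVert T).measureReal_eq measurableSet_Iio

theorem measureReal_not_informed_le_exp (hcoin : PropagationCoins coin P p) {G : SimpleGraph V}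
    {v0 v : V} {lam : ℝ} {k T : ℕ} (hv : G.dist v0 v ≠ 0) (hvk : G.dist v0 v ≤ k)
    (hlam : 1 ≤ lam) (hT : lam * k ≤ p * T) :
    P.real {ω | ¬ informed G.Adj coin v0 T v ω} ≤ Real.exp (-((lam - 1) ^ 2 / (2 * lam)) * k) := by
  obtain ⟨w, hw⟩ := G.exists_walk_of_dist_ne_zero hv
  exact (hcoin.measureReal_not_informed_le w T).trans
    (binomial_real_Iio_le_exp hlam (hw ▸ hvk) hT)

end PropagationCoins

lemma Finset.card_filter_mem_eq_sum_natCard {α : Type*} [Fintype α] (f : α → ℕ)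
    (s : Finset ℕ) :
    (Finset.univ.filter fun a => f a ∈ s).card = ∑ i ∈ s, Nat.card {a // f a = i} := by
  classical
  rw [Finset.card_eq_sum_card_fiberwise (f := f) (t := s) fun a ha => by simpa using ha]
  refine Finset.sum_congr rfl fun i hi => ?_
  rw [Nat.card_eq_fintype_card, Fintype.card_subtype, Finset.filter_filter]
  congr 1
  ext a
  simp only [Finset.mem_filter, Finset.mem_univ, true_and, and_iff_right_iff_imp]
  rintro rfl
  exact hi

theorem propagation_tail_bound_general {V Ω : Type} [Fintype V] [MeasurableSpace Ω]
    (P : Measure Ω) [IsProbabilityMeasure P] (p : ℝ) (hp0 : 0 < p) (hp1 : p ≤ 1)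
    (G : SimpleGraph V) (v0 : V) (coin : ℕ → V → V → Ω → Bool)
    (hcoin : PropagationCoins coin P p)
    (k : ℕ) (lam : ℝ) (hlam : 2 ≤ lam) :
    P {ω | ∃ v, 1 ≤ G.dist v0 v ∧ G.dist v0 v ≤ k ∧
        ¬ informed G.Adj coin v0 ⌈lam * k / p⌉₊ v ω} ≤
      ENNReal.ofReal ((∑ i ∈ Finset.Icc 1 k, (Nat.card {v : V // G.dist v0 v = i} : ℝ)) *
        Real.exp (-((lam - 1) ^ 2 / (2 * lam)) * k)) ∧
    (∑ i ∈ Finset.Icc 1 k, (Nat.card {v : V // G.dist v0 v = i} : ℝ)) *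
        Real.exp (-((lam - 1) ^ 2 / (2 * lam)) * k) ≤
      (∑ i ∈ Finset.Icc 1 k, (Nat.card {v : V // G.dist v0 v = i} : ℝ)) *
        Real.exp (-(lam * k) / 8) := by
  classical
  let q : I := ⟨p, hp0.le, hp1⟩
  set T := ⌈lam * k / p⌉₊
  set A : Finset V := {v | G.dist v0 v ∈ Finset.Icc 1 k}
  have hT : lam * k ≤ q * T := (div_le_iff₀' hp0).1 (Nat.le_ceil _)
  have hunion := measureReal_biUnion_finset_le_card_mul (P := P) A
    (fun v => {ω | ¬ informed G.Adj coin v0 T v ω}) fun v hv => by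
      obtain ⟨hv1, hvk⟩ := Finset.mem_Icc.1 (Finset.mem_filter.1 hv).2
      exact hcoin.measureReal_not_informed_le_exp (p := q) (by omega) hvk (by linarith) hT
  have hcard : (A.card : ℝ) = ∑ i ∈ Finset.Icc 1 k, (Nat.card {v : V // G.dist v0 v = i} : ℝ) := by
    rw [Finset.card_filter_mem_eq_sum_natCard]
    push_cast
    rfl
  refine ⟨?_, ?_⟩
  · rw [← ofReal_measureReal, ← hcard]
    refine ENNReal.ofReal_le_ofReal
      ((measureReal_mono (fun ω hω => ?_) (measure_ne_top _ _)).trans hunion)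
    obtain ⟨v, hv1, hvk, hω⟩ := hω
    exact Set.mem_biUnion (by simp [A, hv1, hvk]) hω
  · refine mul_le_mul_of_nonneg_left (Real.exp_le_exp.2 ?_) (by positivity)
    have := mul_le_mul_of_nonneg_right (div_eight_le_sub_one_sq_div hlam) k.cast_nonneg
    linarith

/-- **Tail bound for propagation on undirected graphs (Lemma 6, first part).** Let `V_i` be the
set of vertices at graph distance exactly `i` from `v0` and `S_k = ∑_{i=1}^k |V_i|`. For every
`k ≥ 1` and `λ ≥ 2`, the probability that after `⌈λ k / p⌉` rounds some vertex at distance at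
most `k` from `v0` is still uninformed is at most `S_k · exp(-((λ-1)²/(2λ)) k)`, which is at
most `S_k · exp(-λ k / 8)`. -/
theorem propagation_tail_bound {V Ω : Type} [Fintype V] [MeasurableSpace Ω]
    (P : Measure Ω) [IsProbabilityMeasure P] (p : ℝ) (hp0 : 0 < p) (hp1 : p ≤ 1)
    (G : SimpleGraph V) (v0 : V) (coin : ℕ → V → V → Ω → Bool)
    (hcoin : PropagationCoins coin P p)
    (k : ℕ) (hk : 1 ≤ k) (lam : ℝ) (hlam : 2 ≤ lam) :
    P {ω | ∃ v, 1 ≤ G.dist v0 v ∧ G.dist v0 v ≤ k ∧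
        ¬ informed G.Adj coin v0 ⌈lam * k / p⌉₊ v ω} ≤
      ENNReal.ofReal ((∑ i ∈ Finset.Icc 1 k, (Nat.card {v : V // G.dist v0 v = i} : ℝ)) *
        Real.exp (-((lam - 1) ^ 2 / (2 * lam)) * k)) ∧
    (∑ i ∈ Finset.Icc 1 k, (Nat.card {v : V // G.dist v0 v = i} : ℝ)) *
        Real.exp (-((lam - 1) ^ 2 / (2 * lam)) * k) ≤
      (∑ i ∈ Finset.Icc 1 k, (Nat.card {v : V // G.dist v0 v = i} : ℝ)) *
        Real.exp (-(lam * k) / 8) :=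
  propagation_tail_bound_general P p hp0 hp1 G v0 coin hcoin k lam hlam
end

section
/- Consider the randomized information propagation process with transmission probability p on a finite connected undirected graph G with n ≥ 2 vertices, starting at any vertex v*. The expected number of rounds until all n vertices are informed is at most max{4·diam(G), 16·ln(2n)} / p, where diam(G) is the diameter of G (the maximum number of edges on a shortest path between any two vertices). -/
open MeasureTheory ProbabilityTheory ENNReal

/-!
Fix a vertex `v` and a shortest path from `v*` to `v`. A token that moves one step along the path
in every round in which the coin of its next edge comes up `true` only visits informed vertices,
and by induction on `t` it has made fewer than `j` steps after `t` rounds with probability at most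
`4^j r^t`, where `r = 1 - 3p/4`. A union bound over the `n` vertices bounds the probability that
the completion time `T` exceeds `t` by `n 4^D r^t`, `D` the diameter. Summing these tails, each
also at most `1`, gives `E T ≤ N + n 4^D r^N / (1 - r)` for `N = ⌈max(3D, 8 ln(2n))/p⌉`.
-/

namespace Propagation

theorem lintegral_iInf_le_tsum_measure {α : Type*} [MeasurableSpace α] (μ : Measure α)
    (A : ℕ → α → Prop) (hA : ∀ t, MeasurableSet {x | ¬ A t x}) :
    ∫⁻ x, (⨅ (t : ℕ) (_ : A t x), (t : ℝ≥0∞)) ∂μ ≤ ∑' t, μ {x | ¬ A t x} := by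
  classical
  have hpoint : ∀ x, ⨅ (t : ℕ) (_ : A t x), (t : ℝ≥0∞) ≤
      ∑' t, {x | ¬ A t x}.indicator 1 x := by
    intro x
    by_cases h : ∃ t, A t x
    · have hbefore : ∀ s ∈ Finset.range (Nat.find h),
          {x | ¬ A s x}.indicator 1 x = (1 : ℝ≥0∞) :=
        fun s hs => Set.indicator_of_mem (Nat.find_min h (Finset.mem_range.1 hs)) _
      calc ⨅ (t : ℕ) (_ : A t x), (t : ℝ≥0∞) ≤ Nat.find h :=
            iInf₂_le (Nat.find h) (Nat.find_spec h)
        _ = ∑ s ∈ Finset.range (Nat.find h), {x | ¬ A s x}.indicator 1 x := by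
          simp [Finset.sum_congr rfl hbefore]
        _ ≤ ∑' t, {x | ¬ A t x}.indicator 1 x := ENNReal.sum_le_tsum _
    · have hall : ∀ t, {x | ¬ A t x}.indicator 1 x = (1 : ℝ≥0∞) :=
        fun t => Set.indicator_of_mem (not_exists.1 h t) _
      simp [hall]
  calc ∫⁻ x, (⨅ (t : ℕ) (_ : A t x), (t : ℝ≥0∞)) ∂μ
      ≤ ∫⁻ x, ∑' t, {x | ¬ A t x}.indicator 1 x ∂μ := lintegral_mono hpoint
    _ = ∑' t, μ {x | ¬ A t x} := by
      rw [lintegral_tsum fun t => (measurable_one.indicator (hA t)).aemeasurable]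
      simp only [lintegral_indicator_one (hA _)]

theorem tsum_le_natCast_add_geometric {f : ℕ → ℝ≥0∞} {C r : ℝ≥0∞} (N : ℕ)
    (hhead : ∀ t < N, f t ≤ 1) (htail : ∀ t, N ≤ t → f t ≤ C * r ^ t) :
    ∑' t, f t ≤ N + C * r ^ N * (1 - r)⁻¹ := by
  rw [← ENNReal.summable.sum_add_tsum_nat_add' (k := N)]
  calc ∑ t ∈ Finset.range N, f t + ∑' t, f (t + N)
      ≤ ∑ _t ∈ Finset.range N, 1 + ∑' t, C * r ^ N * r ^ t := by
        gcongr with t ht t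
        · exact hhead t (Finset.mem_range.1 ht)
        · exact (htail _ (Nat.le_add_left N t)).trans_eq (by ring)
    _ = N + C * r ^ N * (1 - r)⁻¹ := by
        rw [ENNReal.tsum_mul_left, ENNReal.tsum_geometric]; simp

/-- Writing `n = exp (log n)` and `4 ^ D = exp (D log 4)`, the claim is a linear inequality
between exponents, using `log 4 < 3 / 2`. -/
theorem card_mul_four_pow_mul_pow_le {p : ℝ} (hp1 : p ≤ 1) {n D N : ℕ}
    (hn : 0 < n) (hD : 3 * (D : ℝ) ≤ p * N) (hL : 8 * Real.log (2 * n) ≤ p * N) :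
    n * 4 ^ D * (1 - 3 * p / 4) ^ N ≤ (1 / 4 : ℝ) := by
  have hn' : (0 : ℝ) < n := Nat.cast_pos.2 hn
  have hpow : (1 - 3 * p / 4) ^ N ≤ Real.exp (-(3 * p / 4 * N)) := by
    calc (1 - 3 * p / 4) ^ N ≤ Real.exp (-(3 * p / 4)) ^ N :=
          pow_le_pow_left₀ (by linarith) (Real.one_sub_le_exp_neg _) N
      _ = Real.exp (-(3 * p / 4 * N)) := by rw [← Real.exp_nat_mul]; ring_nf
  have hfour : (4 : ℝ) ^ D = Real.exp (D * Real.log 4) := by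
    rw [Real.exp_nat_mul, Real.exp_log (by norm_num)]
  have hlog4 : Real.log 4 = 2 * Real.log 2 := by
    rw [show (4 : ℝ) = 2 ^ 2 by norm_num, Real.log_pow]; norm_num
  have hlog2n : Real.log (2 * n) = Real.log 2 + Real.log n := Real.log_mul (by norm_num) hn'.ne'
  have hlogn : 0 ≤ Real.log n := Real.log_nonneg (Nat.one_le_cast.2 hn)
  have hlog2 := Real.log_two_lt_d9
  have hexponent : Real.log n + D * Real.log 4 - 3 * p / 4 * N ≤ -Real.log 4 := by
    nlinarith [(Nat.cast_nonneg D : (0 : ℝ) ≤ D)]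
  calc n * 4 ^ D * (1 - 3 * p / 4) ^ N
      ≤ n * 4 ^ D * Real.exp (-(3 * p / 4 * N)) := by gcongr
    _ = Real.exp (Real.log n + D * Real.log 4 - 3 * p / 4 * N) := by
      rw [hfour, sub_eq_add_neg, Real.exp_add, Real.exp_add, Real.exp_log hn']
    _ ≤ Real.exp (-Real.log 4) := Real.exp_le_exp.2 hexponent
    _ = 1 / 4 := by rw [Real.exp_neg, Real.exp_log (by norm_num), one_div]

theorem natCast_add_geometric_le {p : ℝ} (hp0 : 0 < p) (hp1 : p ≤ 1) {n : ℕ} (hn : 0 < n)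
    (D : ℕ) :
    let N := ⌈max (3 * (D : ℝ)) (8 * Real.log (2 * n)) / p⌉₊
    let r := ENNReal.ofReal (1 - 3 * p / 4)
    (N : ℝ≥0∞) + n * 4 ^ D * r ^ N * (1 - r)⁻¹ ≤
      ENNReal.ofReal (max (4 * (D : ℝ)) (16 * Real.log (2 * n)) / p) := by
  intro N r
  set L := Real.log (2 * n)
  set M := max (3 * (D : ℝ)) (8 * L) with hMdef
  have hr0 : 0 ≤ 1 - 3 * p / 4 := by linarith
  have hX0 : 0 ≤ n * 4 ^ D * (1 - 3 * p / 4) ^ N := by positivity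
  have hNlow : M / p ≤ N := Nat.le_ceil _
  have hNhigh : (N : ℝ) ≤ M / p + 1 :=
    (Nat.ceil_lt_add_one (div_nonneg (le_max_of_le_left (by positivity)) hp0.le)).le
  have hpN : M ≤ p * N := by rwa [div_le_iff₀' hp0] at hNlow
  have htail := card_mul_four_pow_mul_pow_le hp1 hn
    ((le_max_left _ _).trans hpN) ((le_max_right _ _).trans hpN)
  have hL : 1 / 2 ≤ L := by
    have hn1 : (1 : ℝ) ≤ n := Nat.one_le_cast.2 hn
    have hlog2 := Real.log_two_gt_d9
    have hlogL : Real.log 2 ≤ L := Real.log_le_log (by norm_num) (by linarith)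
    linarith
  have hM : M + 4 / 3 ≤ max (4 * (D : ℝ)) (16 * L) := by
    rcases le_total (3 * (D : ℝ)) (8 * L) with h | h
    · rw [hMdef, max_eq_right h]; exact le_max_of_le_right (by linarith)
    · rw [hMdef, max_eq_left h]; exact le_max_of_le_left (by linarith)
  have hr : (1 - r)⁻¹ = ENNReal.ofReal (4 / (3 * p)) := by
    rw [← ENNReal.ofReal_one, ← ENNReal.ofReal_sub _ hr0,
      ← ENNReal.ofReal_inv_of_pos (by linarith)]
    ring_nf
  have hC : (n : ℝ≥0∞) * 4 ^ D * r ^ N = ENNReal.ofReal (n * 4 ^ D * (1 - 3 * p / 4) ^ N) := by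
    rw [ENNReal.ofReal_mul (by positivity), ENNReal.ofReal_mul (by positivity),
      ENNReal.ofReal_pow hr0, ENNReal.ofReal_pow (by norm_num), ENNReal.ofReal_natCast,
      ENNReal.ofReal_ofNat]
  rw [hC, hr, ← ENNReal.ofReal_natCast, ← ENNReal.ofReal_mul hX0,
    ← ENNReal.ofReal_add (by positivity) (by positivity)]
  refine ENNReal.ofReal_le_ofReal ?_
  calc (N : ℝ) + n * 4 ^ D * (1 - 3 * p / 4) ^ N * (4 / (3 * p))
      ≤ M / p + 1 + 1 / 4 * (4 / (3 * p)) := by gcongr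
    _ ≤ (M + 4 / 3) / p := by
      rw [div_add' _ _ _ hp0.ne', add_div, add_div]
      field_simp
      linarith
    _ ≤ max (4 * (D : ℝ)) (16 * L) / p := by gcongr

section Path

/-- The position reached along a path `0 → 1 → ⋯ → d` by a token that, standing at `i`, crosses
the edge `i → i + 1` in round `s` exactly when `c s i` holds. Along a path of the graph driven by
its edge coins, the vertex at this position is informed. -/
def pathProgress (d : ℕ) (c : ℕ → ℕ → Bool) : ℕ → ℕ
  | 0 => 0
  | t + 1 =>
    if pathProgress d c t < d ∧ c t (pathProgress d c t) then pathProgress d c t + 1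
    else pathProgress d c t

variable {d : ℕ} {c c' : ℕ → ℕ → Bool}

theorem pathProgress_le (t : ℕ) : pathProgress d c t ≤ d := by
  induction t with
  | zero => exact Nat.zero_le d
  | succ t ih =>
    rw [pathProgress]
    split_ifs with h
    exacts [h.1, ih]

theorem pathProgress_congr {t : ℕ} (h : ∀ s < t, ∀ i < d, c s i = c' s i) :
    pathProgress d c t = pathProgress d c' t := by
  induction t with
  | zero => rfl
  | succ t ih =>
    rw [pathProgress, pathProgress, ih fun s hs => h s (by omega)]
    by_cases hlt : pathProgress d c' t < d
    · rw [h t t.lt_succ_self _ hlt]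
    · simp only [hlt, false_and, if_false]

theorem pathProgress_succ_lt_succ_iff {t j : ℕ} (hj : j < d) :
    pathProgress d c (t + 1) < j + 1 ↔
      pathProgress d c t < j ∨ pathProgress d c t = j ∧ c t j = false := by
  rw [pathProgress]
  split_ifs with h
  · constructor
    · intro hlt; left; omega
    · rintro (hlt | ⟨rfl, hc⟩)
      · omega
      · simp [hc] at h
  · constructor
    · intro hle
      rcases Nat.lt_or_eq_of_le (Nat.lt_succ_iff.mp hle) with hlt | rfl
      · exact Or.inl hlt
      · exact Or.inr ⟨rfl, by simpa [hj] using h⟩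
    · rintro (hlt | ⟨rfl, -⟩) <;> omega

theorem informed_pathProgress {V Ω : Type} {E : V → V → Prop} {coin : ℕ → V → V → Ω → Bool}
    {v0 : V} {u : ℕ → V} (hu0 : u 0 = v0) (hu : ∀ i < d, E (u i) (u (i + 1))) (ω : Ω)
    (t : ℕ) :
    informed E coin v0 t (u (pathProgress d (fun s i => coin s (u i) (u (i + 1)) ω) t)) ω := by
  induction t with
  | zero => exact hu0
  | succ t ih =>
    rw [pathProgress]
    split_ifs with h
    exacts [Or.inr ⟨_, hu _ h.1, ih, h.2⟩, Or.inl ih]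

end Path

section Random

variable {Ω : Type} [MeasurableSpace Ω] {d : ℕ} {c : ℕ → ℕ → Ω → Bool}

theorem measurable_pathProgress (hc : ∀ s i, Measurable (c s i)) (t : ℕ) :
    Measurable fun ω => pathProgress d (c · · ω) t := by
  induction t with
  | zero => exact measurable_const
  | succ t ih =>
    have step : Measurable fun x : Ω × ℕ =>
        if x.2 < d ∧ c t x.2 x.1 then x.2 + 1 else x.2 :=
      measurable_from_prod_countable_left fun m => by
        dsimp only
        exact Measurable.ite
          ((MeasurableSet.const (m < d)).inter (hc t m (measurableSet_singleton true)))
          measurable_const measurable_const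
    exact step.comp (measurable_id.prodMk ih)

theorem measure_pathProgress_succ_lt_succ (μ : Measure Ω) (hc : ∀ s i, Measurable (c s i))
    {t j : ℕ} (hj : j < d) (hind : IndepFun (fun ω => pathProgress d (c · · ω) t) (c t j) μ) :
    μ {ω | pathProgress d (c · · ω) (t + 1) < j + 1} =
      μ {ω | pathProgress d (c · · ω) t < j} +
        μ {ω | pathProgress d (c · · ω) t = j} * μ {ω | c t j ω = false} := by
  have hX := measurable_pathProgress (d := d) hc t
  have hsplit : {ω | pathProgress d (c · · ω) (t + 1) < j + 1} =
      {ω | pathProgress d (c · · ω) t < j} ∪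
        ((fun ω => pathProgress d (c · · ω) t) ⁻¹' {j} ∩ c t j ⁻¹' {false}) := by
    ext ω
    exact pathProgress_succ_lt_succ_iff hj
  rw [hsplit, measure_union _ ((hX (measurableSet_singleton j)).inter
      (hc t j (measurableSet_singleton false))),
    hind.measure_inter_preimage_eq_mul _ _ (measurableSet_singleton j)
      (measurableSet_singleton false)]
  · rfl
  · rw [Set.disjoint_left]
    rintro ω hlt ⟨heq, -⟩
    exact hlt.ne heq

theorem measure_lt_succ_eq_add {μ : Measure Ω} {X : Ω → ℕ} (hX : Measurable X) (j : ℕ) :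
    μ {ω | X ω < j + 1} = μ {ω | X ω < j} + μ {ω | X ω = j} := by
  have : {ω | X ω < j + 1} = {ω | X ω < j} ∪ {ω | X ω = j} := by
    ext ω; simp only [Set.mem_union, Set.mem_ofPred_eq]; omega
  have hmeas : MeasurableSet {ω | X ω = j} := hX (measurableSet_singleton j)
  rw [this, measure_union (Set.disjoint_left.2 _) hmeas]
  exact fun ω hlt heq => hlt.ne heq

/-- The factor `4 ^ j` makes the bound propagate: one round multiplies it by
`p + 4 (1 - p) = 4 (1 - 3 p / 4)`. -/
theorem measure_pathProgress_lt_le (P : Measure Ω) [IsProbabilityMeasure P] {p : ℝ}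
    (hp0 : 0 ≤ p) (hp1 : p ≤ 1) (hc : ∀ s i, Measurable (c s i))
    (hind : ∀ t i, IndepFun (fun ω => pathProgress d (c · · ω) t) (c t i) P)
    (hlaw : ∀ t i, P {ω | c t i ω = true} = ENNReal.ofReal p) (t : ℕ) {j : ℕ} (hj : j ≤ d) :
    P {ω | pathProgress d (c · · ω) t < j} ≤ 4 ^ j * ENNReal.ofReal (1 - 3 * p / 4) ^ t := by
  induction t generalizing j with
  | zero =>
    calc P _ ≤ 1 := prob_le_one
      _ ≤ 4 ^ j * ENNReal.ofReal (1 - 3 * p / 4) ^ 0 := by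
        rw [pow_zero, mul_one]; exact one_le_pow₀ (by norm_num)
  | succ t ih =>
    rcases j with _ | j
    · simp
    have hfalse : P {ω | c t j ω = false} = ENNReal.ofReal (1 - p) := by
      have : {ω | c t j ω = false} = {ω | c t j ω = true}ᶜ := by ext; simp
      have hmeas : MeasurableSet {ω | c t j ω = true} := hc t j (measurableSet_singleton true)
      rw [this, prob_compl_eq_one_sub hmeas, hlaw,
        ← ENNReal.ofReal_one, ENNReal.ofReal_sub _ hp0]
    have hsum : ENNReal.ofReal p + ENNReal.ofReal (1 - p) = 1 := by
      rw [← ENNReal.ofReal_add hp0 (by linarith)]; norm_num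
    have hstep : ENNReal.ofReal p + 4 * ENNReal.ofReal (1 - p) =
        4 * ENNReal.ofReal (1 - 3 * p / 4) := by
      rw [← ENNReal.ofReal_ofNat 4, ← ENNReal.ofReal_mul (by norm_num),
        ← ENNReal.ofReal_mul (by norm_num), ← ENNReal.ofReal_add hp0 (by linarith)]
      ring_nf
    set r := ENNReal.ofReal (1 - 3 * p / 4)
    set A := P {ω | pathProgress d (c · · ω) t < j}
    set B := P {ω | pathProgress d (c · · ω) t = j}
    have hA : A ≤ 4 ^ j * r ^ t := ih (by omega)
    have hAB : A + B ≤ 4 ^ (j + 1) * r ^ t := by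
      rw [← measure_lt_succ_eq_add (measurable_pathProgress hc t)]; exact ih hj
    calc P {ω | pathProgress d (c · · ω) (t + 1) < j + 1}
        = ENNReal.ofReal p * A + ENNReal.ofReal (1 - p) * (A + B) := by
          rw [measure_pathProgress_succ_lt_succ P hc hj (hind t j), hfalse, mul_add,
            ← add_assoc, ← add_mul, hsum, one_mul, mul_comm]
      _ ≤ ENNReal.ofReal p * (4 ^ j * r ^ t) +
            ENNReal.ofReal (1 - p) * (4 ^ (j + 1) * r ^ t) := by
          gcongr
      _ = (ENNReal.ofReal p + 4 * ENNReal.ofReal (1 - p)) * (4 ^ j * r ^ t) := by ring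
      _ = 4 ^ (j + 1) * r ^ (t + 1) := by rw [hstep]; ring

end Random

section Graph

variable {V Ω : Type} [MeasurableSpace Ω] {coin : ℕ → V → V → Ω → Bool}

theorem measurableSet_informed [Countable V] {E : V → V → Prop}
    (hmeas : ∀ t a b, Measurable (coin t a b)) (v0 : V) (t : ℕ) (v : V) :
    MeasurableSet {ω | informed E coin v0 t v ω} := by
  induction t generalizing v with
  | zero => exact MeasurableSet.const _
  | succ t ih =>
    have hset : {ω | informed E coin v0 (t + 1) v ω} = {ω | informed E coin v0 t v ω} ∪
        ⋃ a, {_ω | E a v} ∩ {ω | informed E coin v0 t a ω} ∩ coin t a v ⁻¹' {true} := by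
      ext ω
      simp only [informed, Set.mem_union, Set.mem_iUnion, Set.mem_inter_iff, Set.mem_preimage,
        Set.mem_singleton_iff, Set.mem_ofPred_eq, and_assoc]
    rw [hset]
    exact (ih v).union <| .iUnion fun a =>
      ((MeasurableSet.const _).inter (ih a)).inter (hmeas t a v (measurableSet_singleton true))

/-- The progress along a path by time `t` only reads coins of rounds before `t`. -/
theorem indepFun_pathProgress_coin {P : Measure Ω} (hmeas : ∀ t a b, Measurable (coin t a b))
    (hind : iIndepFun (fun j : ℕ × V × V => coin j.1 j.2.1 j.2.2) P) (u : ℕ → V)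
    (d t : ℕ) (a b : V) :
    IndepFun (fun ω => pathProgress d (fun s i => coin s (u i) (u (i + 1)) ω) t)
      (coin t a b) P := by
  classical
  let S : Finset (ℕ × V × V) :=
    (Finset.range t ×ˢ Finset.range d).image fun x => (x.1, u x.2, u (x.2 + 1))
  have hdisj : Disjoint S {(t, a, b)} := by simp [S]
  have hmem : ∀ s < t, ∀ i < d, (s, u i, u (i + 1)) ∈ S := fun s hs i hi =>
    Finset.mem_image.2 ⟨(s, i), by simp [hs, hi]⟩
  let φ : (S → Bool) → ℕ := fun x =>
    pathProgress d (fun s i => if h : (s, u i, u (i + 1)) ∈ S then x ⟨_, h⟩ else false) t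
  have hφ : (fun ω => pathProgress d (fun s i => coin s (u i) (u (i + 1)) ω) t) =
      fun ω => φ fun k : S => coin k.1.1 k.1.2.1 k.1.2.2 ω :=
    funext fun ω => pathProgress_congr fun s hs i hi => by rw [dif_pos (hmem s hs i hi)]
  rw [hφ]
  exact (hind.indepFun_finset S {(t, a, b)} hdisj fun k => hmeas _ _ _).comp
    (measurable_of_finite φ)
    (measurable_of_finite fun x => x ⟨(t, a, b), Finset.mem_singleton_self _⟩)

theorem measure_not_informed_le (P : Measure Ω) [IsProbabilityMeasure P] {p : ℝ} (hp0 : 0 ≤ p)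
    (hp1 : p ≤ 1) (G : SimpleGraph V) (hcoin : PropagationCoins coin P p) {v0 v : V}
    (hreach : G.Reachable v0 v) (t : ℕ) :
    P {ω | ¬ informed G.Adj coin v0 t v ω} ≤
      4 ^ G.dist v0 v * ENNReal.ofReal (1 - 3 * p / 4) ^ t := by
  obtain ⟨hmeas, hind, hlaw⟩ := hcoin
  obtain ⟨w, hw⟩ := hreach.exists_walk_length_eq_dist
  set d := G.dist v0 v
  have hadj : ∀ i < d, G.Adj (w.getVert i) (w.getVert (i + 1)) :=
    fun i hi => w.adj_getVert_succ (hw ▸ hi)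
  have hsub : {ω | ¬ informed G.Adj coin v0 t v ω} ⊆
      {ω | pathProgress d (fun s i => coin s (w.getVert i) (w.getVert (i + 1)) ω) t < d} := by
    refine fun ω hω => lt_of_le_of_ne (pathProgress_le t) fun heq => hω ?_
    have hinf := informed_pathProgress (coin := coin) w.getVert_zero hadj ω t
    rwa [heq, ← hw, w.getVert_length] at hinf
  exact (measure_mono hsub).trans <| measure_pathProgress_lt_le P hp0 hp1
    (fun s i => hmeas _ _ _) (fun s i => indepFun_pathProgress_coin hmeas hind _ d s _ _)
    (fun s i => hlaw _ _ _) t le_rfl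

theorem measure_not_forall_informed_le [Fintype V] (P : Measure Ω) [IsProbabilityMeasure P]
    {p : ℝ} (hp0 : 0 ≤ p) (hp1 : p ≤ 1) {G : SimpleGraph V} (hconn : G.Connected)
    (hcoin : PropagationCoins coin P p) {v0 : V} {D : ℕ} (hD : ∀ v, G.dist v0 v ≤ D) (t : ℕ) :
    P {ω | ¬ ∀ v, informed G.Adj coin v0 t v ω} ≤
      Fintype.card V * 4 ^ D * ENNReal.ofReal (1 - 3 * p / 4) ^ t := by
  have hunion : {ω | ¬ ∀ v, informed G.Adj coin v0 t v ω} =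
      ⋃ v, {ω | ¬ informed G.Adj coin v0 t v ω} := by
    ext ω; simp
  calc P {ω | ¬ ∀ v, informed G.Adj coin v0 t v ω}
      ≤ ∑ v, P {ω | ¬ informed G.Adj coin v0 t v ω} := hunion ▸ measure_iUnion_fintype_le P _
    _ ≤ ∑ _v : V, 4 ^ D * ENNReal.ofReal (1 - 3 * p / 4) ^ t := by
      gcongr with v
      exact (measure_not_informed_le P hp0 hp1 G hcoin (hconn v0 v) t).trans
        (by gcongr; exacts [by norm_num, hD v])
    _ = Fintype.card V * 4 ^ D * ENNReal.ofReal (1 - 3 * p / 4) ^ t := by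
      rw [Finset.sum_const, Finset.card_univ, nsmul_eq_mul, mul_assoc]

end Graph

end Propagation

open Propagation in
theorem propagation_time_diameter_general {V Ω : Type} [Fintype V] [MeasurableSpace Ω]
    (P : Measure Ω) [IsProbabilityMeasure P] (p : ℝ) (hp0 : 0 < p) (hp1 : p ≤ 1)
    (G : SimpleGraph V) (hconn : G.Connected)
    (v0 : V) (coin : ℕ → V → V → Ω → Bool) (hcoin : PropagationCoins coin P p) :
    ∫⁻ ω, (⨅ (t : ℕ) (_ : ∀ v, informed G.Adj coin v0 t v ω), (t : ℝ≥0∞)) ∂P ≤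
      ENNReal.ofReal (max
          (4 * ((Finset.univ.sup fun u => Finset.univ.sup fun v => G.dist u v : ℕ) : ℝ))
          (16 * Real.log (2 * Fintype.card V)) / p) := by
  set D := Finset.univ.sup fun u => Finset.univ.sup fun v => G.dist u v
  have hD : ∀ v, G.dist v0 v ≤ D := fun v =>
    (Finset.le_sup (f := G.dist v0) (Finset.mem_univ v)).trans
      (Finset.le_sup (f := fun u => Finset.univ.sup (G.dist u)) (Finset.mem_univ v0))
  have hmeas : ∀ t, MeasurableSet {ω | ¬ ∀ v, informed G.Adj coin v0 t v ω} := fun t =>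
    (Set.ofPred_forall (fun v ω => informed G.Adj coin v0 t v ω) ▸
      MeasurableSet.iInter fun v => measurableSet_informed hcoin.1 v0 t v).compl
  calc ∫⁻ ω, (⨅ (t : ℕ) (_ : ∀ v, informed G.Adj coin v0 t v ω), (t : ℝ≥0∞)) ∂P
      ≤ ∑' t, P {ω | ¬ ∀ v, informed G.Adj coin v0 t v ω} :=
        lintegral_iInf_le_tsum_measure P _ hmeas
    _ ≤ _ := tsum_le_natCast_add_geometric _ (fun _ _ => prob_le_one)
        fun t _ => measure_not_forall_informed_le P hp0.le hp1 hconn hcoin hD t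
    _ ≤ _ := natCast_add_geometric_le hp0 hp1 (Fintype.card_pos_iff.2 ⟨v0⟩) D

/-- **Expected propagation time on connected undirected graphs.** On a finite connected
undirected graph with `n ≥ 2` vertices, the expected number of rounds until all vertices are
informed is at most `max{4 diam(G), 16 ln(2n)} / p`, where `diam(G)` is the diameter of `G`. -/
theorem propagation_time_diameter {V Ω : Type} [Fintype V] [MeasurableSpace Ω]
    (P : Measure Ω) [IsProbabilityMeasure P] (p : ℝ) (hp0 : 0 < p) (hp1 : p ≤ 1)
    (G : SimpleGraph V) (hconn : G.Connected) (hn : 2 ≤ Fintype.card V)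
    (v0 : V) (coin : ℕ → V → V → Ω → Bool) (hcoin : PropagationCoins coin P p) :
    ∫⁻ ω, (⨅ (t : ℕ) (_ : ∀ v, informed G.Adj coin v0 t v ω), (t : ℝ≥0∞)) ∂P ≤
      ENNReal.ofReal (max
          (4 * ((Finset.univ.sup fun u => Finset.univ.sup fun v => G.dist u v : ℕ) : ℝ))
          (16 * Real.log (2 * Fintype.card V)) / p) :=
  propagation_time_diameter_general P p hp0 hp1 G hconn v0 coin hcoin
end

section
/- Consider the randomized information propagation process with transmission probability p on a finite strongly connected directed graph G with μ vertices, starting at any vertex v*. For every k with 1 ≤ k ≤ μ, the expected number of rounds until at least k vertices are informed is at most (k-1)/p. -/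
open MeasureTheory ProbabilityTheory ENNReal

/-!
Let `N t` be the number of vertices informed after `t` rounds. As long as `N t < k ≤ μ`, strong
connectivity gives an edge leaving the informed set; its coin of round `t` is independent of the
first `t` rounds, so with probability `p` it informs a new vertex. Hence the expected deficit
`∫ (k - N t)⁺ dP`, which starts at `k - 1`, drops in round `t` by at least `p · P(N t < k)`.
Summing over all rounds gives `p · ∑ₜ P(N t < k) ≤ k - 1`, and this sum is the expected time
until `k` vertices are informed.
-/

theorem Relation.ReflTransGen.exists_rel_of_mem_of_notMem {α : Type*} {r : α → α → Prop}
    {s : Set α} {a b : α} (h : Relation.ReflTransGen r a b) (ha : a ∈ s) (hb : b ∉ s) :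
    ∃ u ∈ s, ∃ w ∉ s, r u w := by
  induction h with
  | refl => exact absurd ha hb
  | @tail c d _ hcd ih =>
    by_cases hc : c ∈ s
    · exact ⟨c, hc, d, hb, hcd⟩
    · exact ih hc

theorem Finset.exists_rel_mem_notMem_of_card_lt {α : Type*} [Fintype α] {r : α → α → Prop}
    (hconn : ∀ u v, Relation.ReflTransGen r u v) {S : Finset α} {a : α} (ha : a ∈ S)
    (hS : S.card < Fintype.card α) : ∃ u ∈ S, ∃ w ∉ S, r u w := by
  obtain ⟨b, -, hb⟩ := Finset.exists_mem_notMem_of_card_lt_card (s := S) (t := Finset.univ)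
    (by rwa [Finset.card_univ])
  exact (hconn a b).exists_rel_of_mem_of_notMem (s := S) ha hb

theorem ENNReal.tsum_mul_le_of_succ_add_le {q g : ℕ → ℝ≥0∞} {c : ℝ≥0∞}
    (h : ∀ t, g (t + 1) + q t * c ≤ g t) : (∑' t, q t) * c ≤ g 0 := by
  have partial_sums : ∀ n, (∑ t ∈ Finset.range n, q t * c) + g n ≤ g 0 := by
    intro n
    induction n with
    | zero => simp
    | succ n ih =>
      calc (∑ t ∈ Finset.range (n + 1), q t * c) + g (n + 1)
          = (∑ t ∈ Finset.range n, q t * c) + (g (n + 1) + q n * c) := by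
            rw [Finset.sum_range_succ]; ring
        _ ≤ g 0 := le_trans (add_le_add_right (h n) _) ih
  rw [← ENNReal.tsum_mul_right, ENNReal.tsum_eq_iSup_nat]
  exact iSup_le fun n => le_trans le_self_add (partial_sums n)

theorem ENNReal.iInf_natCast_le_tsum_ite (Q : ℕ → Prop) [DecidablePred Q] :
    ⨅ (t : ℕ) (_ : Q t), (t : ℝ≥0∞) ≤ ∑' t, if Q t then 0 else 1 := by
  by_cases h : ∃ t, Q t
  · calc ⨅ (t : ℕ) (_ : Q t), (t : ℝ≥0∞)
        ≤ (Nat.find h : ℝ≥0∞) := iInf₂_le _ (Nat.find_spec h)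
      _ = ∑ t ∈ Finset.range (Nat.find h), if Q t then 0 else 1 := by
        rw [Finset.sum_congr rfl fun t ht => if_neg (Nat.find_min h (Finset.mem_range.1 ht))]
        simp
      _ ≤ ∑' t, if Q t then 0 else 1 := ENNReal.sum_le_tsum _
  · simp_all

theorem Set.setOf_mem_and_mem_eq_biUnion {α Ω : Type*} (X : Ω → α) (G : Finset α)
    (A : α → Set Ω) : {ω | X ω ∈ G ∧ ω ∈ A (X ω)} = ⋃ a ∈ G, X ⁻¹' {a} ∩ A a := by
  ext ω; simp

section Selection

variable {α Ω : Type*} [MeasurableSpace Ω] {X : Ω → α} {G : Finset α} {A : α → Set Ω}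

theorem MeasurableSet.setOf_mem_and_mem (hX : ∀ a ∈ G, MeasurableSet (X ⁻¹' {a}))
    (hA : ∀ a ∈ G, MeasurableSet (A a)) : MeasurableSet {ω | X ω ∈ G ∧ ω ∈ A (X ω)} := by
  rw [Set.setOf_mem_and_mem_eq_biUnion]
  exact Finset.measurableSet_biUnion G fun a ha => (hX a ha).inter (hA a ha)

theorem MeasureTheory.measure_setOf_mem_and_mem_eq_mul {P : Measure Ω} {c : ℝ≥0∞}
    (hX : ∀ a ∈ G, MeasurableSet (X ⁻¹' {a})) (hA : ∀ a ∈ G, MeasurableSet (A a))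
    (hXA : ∀ a ∈ G, P (X ⁻¹' {a} ∩ A a) = P (X ⁻¹' {a}) * c) :
    P {ω | X ω ∈ G ∧ ω ∈ A (X ω)} = P (X ⁻¹' G) * c := by
  have hdisj : (G : Set α).PairwiseDisjoint fun a => X ⁻¹' {a} ∩ A a :=
    (Set.pairwiseDisjoint_fiber X G).mono fun _ => Set.inter_subset_left
  rw [Set.setOf_mem_and_mem_eq_biUnion,
    measure_biUnion_finset hdisj fun a ha => (hX a ha).inter (hA a ha),
    ← sum_measure_preimage_singleton G hX, Finset.sum_mul]
  exact Finset.sum_congr rfl hXA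

end Selection

namespace Propagation

variable {V Ω : Type} {E : V → V → Prop} {coin : ℕ → V → V → Ω → Bool} {v0 : V}

theorem informed_start (t : ℕ) (ω : Ω) : informed E coin v0 t v0 ω := by
  induction t with
  | zero => rfl
  | succ t ih => exact Or.inl ih

open Classical in
noncomputable def informedSet [Fintype V] (E : V → V → Prop) (coin : ℕ → V → V → Ω → Bool)
    (v0 : V) (t : ℕ) (ω : Ω) : Finset V :=
  Finset.univ.filter fun v => informed E coin v0 t v ω

section InformedSet

variable [Fintype V] {t : ℕ} {ω : Ω}

@[simp]
theorem mem_informedSet {v : V} : v ∈ informedSet E coin v0 t ω ↔ informed E coin v0 t v ω := by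
  simp [informedSet]

theorem natCard_informed_eq_card_informedSet :
    Nat.card {v : V // informed E coin v0 t v ω} = (informedSet E coin v0 t ω).card := by
  classical
  rw [Nat.card_eq_fintype_card, Fintype.card_subtype]
  congr

theorem informedSet_zero : informedSet E coin v0 0 ω = {v0} := by
  ext v; simp [informed]

theorem informedSet_subset_succ :
    informedSet E coin v0 t ω ⊆ informedSet E coin v0 (t + 1) ω :=
  fun _ hv => mem_informedSet.2 (Or.inl (mem_informedSet.1 hv))

theorem card_informedSet_lt_succ {u w : V} (hu : u ∈ informedSet E coin v0 t ω)
    (hw : w ∉ informedSet E coin v0 t ω) (huw : E u w) (hcoin : coin t u w ω = true) :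
    (informedSet E coin v0 t ω).card < (informedSet E coin v0 (t + 1) ω).card := by
  refine Finset.card_lt_card <|
    (Finset.ssubset_iff_of_subset informedSet_subset_succ).2 ⟨w, ?_, hw⟩
  exact mem_informedSet.2 (Or.inr ⟨u, huw, mem_informedSet.1 hu, hcoin⟩)

end InformedSet

variable (coin) in
abbrev coinFiltration (t : ℕ) : MeasurableSpace Ω :=
  ⨆ j ∈ {j : ℕ × V × V | j.1 < t}, MeasurableSpace.comap (coin j.1 j.2.1 j.2.2) inferInstance

theorem coinFiltration_mono {s t : ℕ} (h : s ≤ t) : coinFiltration coin s ≤ coinFiltration coin t :=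
  biSup_mono fun _ hj => lt_of_lt_of_le hj h

theorem coinFiltration_le [MeasurableSpace Ω] (hmeas : ∀ t u v, Measurable (coin t u v)) (t : ℕ) :
    coinFiltration coin t ≤ ‹MeasurableSpace Ω› :=
  iSup₂_le fun j _ => (hmeas j.1 j.2.1 j.2.2).comap_le

theorem measurable_coin_coinFiltration (t : ℕ) (u v : V) :
    Measurable[coinFiltration coin (t + 1)] (coin t u v) :=
  measurable_iff_comap_le.2 <| le_iSup₂ (f := fun (j : ℕ × V × V) (_ : j ∈ {j | j.1 < t + 1}) =>
    MeasurableSpace.comap (coin j.1 j.2.1 j.2.2) inferInstance) (t, u, v)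
    (show (t, u, v) ∈ {j : ℕ × V × V | j.1 < t + 1} from t.lt_succ_self)

theorem measurable_informed [Finite V] :
    ∀ t v, Measurable[coinFiltration coin t] (informed E coin v0 t v)
  | 0, v => measurable_const
  | t + 1, v => by
    let _ := coinFiltration coin (t + 1)
    have hprev u : Measurable[coinFiltration coin (t + 1)] (informed E coin v0 t u) :=
      (measurable_informed t u).mono (coinFiltration_mono t.le_succ) le_rfl
    exact (hprev v).or <| Measurable.exists fun u => measurable_const.and <|
      (hprev u).and <| (measurable_coin_coinFiltration t u v).eq_const true

theorem measurableSet_informedSet_eq [Fintype V] (t : ℕ) (S : Finset V) :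
    MeasurableSet[coinFiltration coin t] {ω | informedSet E coin v0 t ω = S} := by
  let _ := coinFiltration coin t
  have h : {ω | informedSet E coin v0 t ω = S} = {ω | ∀ v, informed E coin v0 t v ω ↔ v ∈ S} := by
    ext ω; simp [Finset.ext_iff]
  rw [h]
  exact (Measurable.forall fun v => (measurable_informed t v).iff measurable_const).setOf

theorem measure_inter_coin_eq_mul [MeasurableSpace Ω] {P : Measure Ω}
    (hmeas : ∀ t u v, Measurable (coin t u v))
    (hind : iIndepFun (fun j : ℕ × V × V => coin j.1 j.2.1 j.2.2) P) {t : ℕ} {B : Set Ω}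
    (hB : MeasurableSet[coinFiltration coin t] B) (u w : V) :
    P (B ∩ {ω | coin t u w ω = true}) = P B * P {ω | coin t u w ω = true} := by
  have hindep := indep_iSup_of_disjoint (fun j => (hmeas j.1 j.2.1 j.2.2).comap_le)
    ((iIndepFun_iff_iIndep _ _ _).1 hind) (S := {j | j.1 < t}) (T := {(t, u, w)})
    (by simp)
  refine (Indep_iff _ _ _).1 hindep _ _ hB ?_
  exact le_iSup₂ (f := fun (j : ℕ × V × V) (_ : j ∈ ({(t, u, w)} : Set (ℕ × V × V))) =>
    MeasurableSpace.comap (coin j.1 j.2.1 j.2.2) inferInstance) (t, u, w) rfl _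
    ⟨{true}, trivial, rfl⟩

theorem measurableSet_card_informedSet_lt [Fintype V] [MeasurableSpace Ω]
    (hmeas : ∀ t u v, Measurable (coin t u v)) (t k : ℕ) :
    MeasurableSet {ω | (informedSet E coin v0 t ω).card < k} := by
  have h : {ω | (informedSet E coin v0 t ω).card < k} =
      ⋃ S ∈ Finset.univ.filter (fun S : Finset V => S.card < k),
        {ω | informedSet E coin v0 t ω = S} := by
    ext ω; simp
  rw [h]
  exact Finset.measurableSet_biUnion _ fun S _ =>
    coinFiltration_le hmeas t _ (measurableSet_informedSet_eq t S)

section Drift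

variable [Fintype V] [MeasurableSpace Ω] {P : Measure Ω} {p : ℝ} {k : ℕ}

theorem lintegral_sub_card_succ_add_le (hconn : ∀ u v : V, Relation.ReflTransGen E u v)
    (hcoin : PropagationCoins coin P p) (hk : k ≤ Fintype.card V) (t : ℕ) :
    ∫⁻ ω, ((k - (informedSet E coin v0 (t + 1) ω).card : ℕ) : ℝ≥0∞) ∂P
        + P {ω | (informedSet E coin v0 t ω).card < k} * ENNReal.ofReal p
      ≤ ∫⁻ ω, ((k - (informedSet E coin v0 t ω).card : ℕ) : ℝ≥0∞) ∂P := by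
  obtain ⟨hmeas, hind, hprob⟩ := hcoin
  set I := informedSet E coin v0
  have hcross (S : Finset V) :
      ∃ e : V × V, v0 ∈ S → S.card < k → e.1 ∈ S ∧ e.2 ∉ S ∧ E e.1 e.2 := by
    by_cases hS : v0 ∈ S ∧ S.card < k
    · obtain ⟨u, hu, w, hw, huw⟩ := Finset.exists_rel_mem_notMem_of_card_lt hconn hS.1 (by omega)
      exact ⟨(u, w), fun _ _ => ⟨hu, hw, huw⟩⟩
    · exact ⟨(v0, v0), fun h h' => absurd ⟨h, h'⟩ hS⟩
  -- The edge tried in round `t` depends only on the informed set, which is determined by the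
  -- earlier rounds; this is what makes its coin independent of the choice.
  choose e he using hcross
  set G := Finset.univ.filter fun S : Finset V => S.card < k
  set A := fun S : Finset V => {ω | coin t (e S).1 (e S).2 ω = true}
  set B := {ω | I t ω ∈ G ∧ ω ∈ A (I t ω)}
  have hfiber (S : Finset V) : MeasurableSet[coinFiltration coin t] (I t ⁻¹' {S}) :=
    measurableSet_informedSet_eq t S
  have hA (S : Finset V) : MeasurableSet (A S) := hmeas t _ _ (measurableSet_singleton true)
  have hB : MeasurableSet B := .setOf_mem_and_mem
    (fun S _ => coinFiltration_le hmeas t _ (hfiber S)) fun S _ => hA S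
  have hPB : P B = P {ω | (I t ω).card < k} * ENNReal.ofReal p := by
    have hG : {ω | (I t ω).card < k} = I t ⁻¹' G := by ext ω; simp [G]
    rw [hG]
    refine measure_setOf_mem_and_mem_eq_mul (fun S _ => coinFiltration_le hmeas t _ (hfiber S))
      (fun S _ => hA S) fun S _ => ?_
    rw [measure_inter_coin_eq_mul hmeas hind (hfiber S), hprob]
  have hpt (ω : Ω) : ((k - (I (t + 1) ω).card : ℕ) : ℝ≥0∞) + B.indicator 1 ω
      ≤ ((k - (I t ω).card : ℕ) : ℝ≥0∞) := by
    have hmono : (I t ω).card ≤ (I (t + 1) ω).card := Finset.card_le_card informedSet_subset_succ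
    by_cases hω : ω ∈ B
    · have hcard := (Finset.mem_filter.1 hω.1).2
      obtain ⟨hu, hw, huw⟩ := he _ (mem_informedSet.2 (informed_start t ω)) hcard
      have hgrow : (I t ω).card < (I (t + 1) ω).card := card_informedSet_lt_succ hu hw huw hω.2
      rw [Set.indicator_of_mem hω, Pi.one_apply]
      exact_mod_cast (by omega : k - (I (t + 1) ω).card + 1 ≤ k - (I t ω).card)
    · rw [Set.indicator_of_notMem hω, add_zero]
      exact_mod_cast Nat.sub_le_sub_left hmono k
  calc _ = ∫⁻ ω, (((k - (I (t + 1) ω).card : ℕ) : ℝ≥0∞) + B.indicator 1 ω) ∂P := by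
        rw [lintegral_add_right _ (measurable_one.indicator hB), lintegral_indicator_one hB, hPB]
    _ ≤ ∫⁻ ω, ((k - (I t ω).card : ℕ) : ℝ≥0∞) ∂P := lintegral_mono hpt

theorem tsum_measure_card_informedSet_lt_le [IsProbabilityMeasure P] (hp0 : 0 < p)
    (hconn : ∀ u v : V, Relation.ReflTransGen E u v) (hcoin : PropagationCoins coin P p)
    (hk : k ≤ Fintype.card V) :
    ∑' t, P {ω | (informedSet E coin v0 t ω).card < k} ≤ ENNReal.ofReal (((k : ℝ) - 1) / p) := by
  rw [ENNReal.ofReal_div_of_pos hp0, ENNReal.le_div_iff_mul_le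
    (Or.inl (ENNReal.ofReal_pos.2 hp0).ne') (Or.inl ofReal_ne_top)]
  calc _ ≤ ∫⁻ ω, ((k - (informedSet E coin v0 0 ω).card : ℕ) : ℝ≥0∞) ∂P :=
        ENNReal.tsum_mul_le_of_succ_add_le (lintegral_sub_card_succ_add_le hconn hcoin hk)
    _ = ENNReal.ofReal ((k : ℝ) - 1) := by
        rcases k with _ | k <;> simp [informedSet_zero]

end Drift

end Propagation

open Propagation

theorem propagation_strongly_connected_general {V Ω : Type} [Fintype V] [MeasurableSpace Ω]
    (P : Measure Ω) [IsProbabilityMeasure P] (p : ℝ) (hp0 : 0 < p)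
    (E : V → V → Prop) (hconn : ∀ u v : V, Relation.ReflTransGen E u v)
    (v0 : V) (coin : ℕ → V → V → Ω → Bool) (hcoin : PropagationCoins coin P p)
    (k : ℕ) (hk2 : k ≤ Fintype.card V) :
    ∫⁻ ω, (⨅ (t : ℕ) (_ : k ≤ Nat.card {v : V // informed E coin v0 t v ω}), (t : ℝ≥0∞)) ∂P ≤
      ENNReal.ofReal (((k : ℝ) - 1) / p) := by
  classical
  set N := fun t ω => (informedSet E coin v0 t ω).card
  have hN (t : ℕ) : MeasurableSet {ω | N t ω < k} :=
    measurableSet_card_informedSet_lt hcoin.1 t k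
  have hfirst (ω : Ω) : ⨅ (t : ℕ) (_ : k ≤ Nat.card {v : V // informed E coin v0 t v ω}),
      (t : ℝ≥0∞) ≤ ∑' t, {ω | N t ω < k}.indicator 1 ω := by
    simp_rw [natCard_informed_eq_card_informedSet]
    refine (ENNReal.iInf_natCast_le_tsum_ite _).trans_eq (tsum_congr fun t => ?_)
    simp only [Set.indicator_apply, Set.mem_ofPred_eq, Pi.one_apply, N, ← not_le, ite_not]
  calc _ ≤ ∫⁻ ω, ∑' t, {ω | N t ω < k}.indicator 1 ω ∂P := lintegral_mono hfirst
    _ = ∑' t, P {ω | N t ω < k} := by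
      rw [lintegral_tsum fun t => (measurable_one.indicator (hN t)).aemeasurable]
      simp_rw [lintegral_indicator_one (hN _)]
    _ ≤ _ := tsum_measure_card_informedSet_lt_le hp0 hconn hcoin hk2

/-- **Propagation on strongly connected directed graphs.** On a finite strongly connected
directed graph with `μ` vertices, for every `1 ≤ k ≤ μ` the expected number of rounds until at
least `k` vertices are informed is at most `(k - 1) / p`. -/
theorem propagation_strongly_connected {V Ω : Type} [Fintype V] [MeasurableSpace Ω]
    (P : Measure Ω) [IsProbabilityMeasure P] (p : ℝ) (hp0 : 0 < p) (hp1 : p ≤ 1)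
    (E : V → V → Prop) (hconn : ∀ u v : V, Relation.ReflTransGen E u v)
    (v0 : V) (coin : ℕ → V → V → Ω → Bool) (hcoin : PropagationCoins coin P p)
    (k : ℕ) (hk1 : 1 ≤ k) (hk2 : k ≤ Fintype.card V) :
    ∫⁻ ω, (⨅ (t : ℕ) (_ : k ≤ Nat.card {v : V // informed E coin v0 t v ω}), (t : ℝ≥0∞)) ∂P ≤
      ENNReal.ofReal (((k : ℝ) - 1) / p) :=
  propagation_strongly_connected_general P p hp0 E hconn v0 coin hcoin k hk2
end

section
/- Consider the randomized information propagation process with transmission probability p on the bidirectional ring (undirected cycle graph) with μ ≥ 3 vertices, starting at any vertex v*. For every k with 1 ≤ k ≤ μ, the expected number of rounds until at least k vertices are informed is at most k/(2p). -/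
open MeasureTheory ProbabilityTheory ENNReal

/-!
The informed set always contains an arc around `v0` swept by two frontiers moving away from `v0`
in opposite directions, each advanced only by the coin on the edge just ahead of it. In every round
their total advance `S` gains two fresh coins independent of the past, so for the potential
`Φ s = s` (if `s + 1 < k`), `Φ s = k` (otherwise) we get
`E Φ(S (t+1)) ≥ E Φ(S t) + 2p · P(S t + 1 < k)`. As `Φ ≤ k`, this gives
`2p · ∑ₜ P(S t + 1 < k) ≤ k`, and the sum bounds the expected time until `k` vertices are
informed.
-/

open Finset in
lemma iInf_natCast_le_tsum_indicator {α : Type*} {Q : ℕ → Prop} {E : ℕ → Set α} {x : α}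
    (h : ∀ t, x ∉ E t → Q t) :
    (⨅ (t : ℕ) (_ : Q t), (t : ℝ≥0∞)) ≤ ∑' t, (E t).indicator 1 x := by
  classical
  by_cases hQ : ∃ t, Q t
  · calc (⨅ (t : ℕ) (_ : Q t), (t : ℝ≥0∞)) ≤ (Nat.find hQ : ℝ≥0∞) :=
          iInf₂_le _ (Nat.find_spec hQ)
      _ = ∑ t ∈ range (Nat.find hQ), (E t).indicator 1 x := by
        rw [sum_congr rfl fun t ht ↦
          Set.indicator_of_mem (not_imp_comm.1 (h t) (Nat.find_min hQ (mem_range.1 ht))) _]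
        simp
      _ ≤ _ := ENNReal.sum_le_tsum _
  · simp only [not_exists] at hQ
    have hone : ∀ t, (E t).indicator (1 : α → ℝ≥0∞) x = 1 :=
      fun t ↦ Set.indicator_of_mem (not_imp_comm.1 (h t) (hQ t)) _
    rw [tsum_congr hone, ENNReal.tsum_const_eq_top_of_ne_zero one_ne_zero]
    exact le_top

/-- Potential for the first time `s + 1 ≥ k`: it grows at least as fast as `s` before that time
and jumps to its maximum `k` at that time. -/
def hitPotential (k s : ℕ) : ℕ := if s + 1 < k then s else k

lemma hitPotential_le (k s : ℕ) : hitPotential k s ≤ k := by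
  unfold hitPotential; split_ifs <;> omega

lemma hitPotential_add_le {k s s' a b : ℕ} (hs : s + a + b ≤ s') (ha : a ≤ 1) (hb : b ≤ 1) :
    hitPotential k s + (if s + 1 < k then a + b else 0) ≤ hitPotential k s' := by
  unfold hitPotential; split_ifs <;> omega

section Drift

variable {Ω : Type*} {S : ℕ → Ω → ℕ} {A B : ℕ → Set Ω} {k : ℕ}

lemma hitPotential_add_indicator_le {t : ℕ} {ω : Ω}
    (hstep : S t ω + (A t).indicator 1 ω + (B t).indicator 1 ω ≤ S (t + 1) ω) :
    (hitPotential k (S t ω) : ℝ≥0∞) + ({ω | S t ω + 1 < k} ∩ A t).indicator 1 ω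
      + ({ω | S t ω + 1 < k} ∩ B t).indicator 1 ω ≤ hitPotential k (S (t + 1) ω) := by
  classical
  have key := hitPotential_add_le (k := k) hstep (Set.indicator_le_self' (by simp) ω)
    (Set.indicator_le_self' (by simp) ω)
  simp only [Set.indicator_apply, Set.mem_inter_iff, Set.mem_ofPred_eq, Pi.one_apply] at key ⊢
  by_cases hE : S t ω + 1 < k <;> by_cases hA : ω ∈ A t <;> by_cases hB : ω ∈ B t <;>
    simp only [hE, hA, hB, true_and, false_and, if_true, if_false, add_zero] at key ⊢ <;>
    exact_mod_cast key

variable [MeasurableSpace Ω] {P : Measure Ω} {q : ℝ≥0∞}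

open Finset in
theorem two_mul_tsum_measure_le [IsProbabilityMeasure P] (hS : ∀ t, Measurable (S t))
    (hA : ∀ t, MeasurableSet (A t)) (hB : ∀ t, MeasurableSet (B t))
    (hstep : ∀ t ω, S t ω + (A t).indicator 1 ω + (B t).indicator 1 ω ≤ S (t + 1) ω)
    (hqA : ∀ t, P ({ω | S t ω + 1 < k} ∩ A t) = q * P {ω | S t ω + 1 < k})
    (hqB : ∀ t, P ({ω | S t ω + 1 < k} ∩ B t) = q * P {ω | S t ω + 1 < k}) :
    2 * q * ∑' t, P {ω | S t ω + 1 < k} ≤ k := by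
  set E : ℕ → Set Ω := fun t ↦ {ω | S t ω + 1 < k}
  set Φ : ℕ → Ω → ℝ≥0∞ := fun t ω ↦ hitPotential k (S t ω)
  have hE : ∀ t, MeasurableSet (E t) := fun t ↦ hS t (.of_discrete (s := {n | n + 1 < k}))
  have growth : ∀ N, 2 * q * ∑ t ∈ range N, P (E t) ≤ ∫⁻ ω, Φ N ω ∂P := by
    intro N
    induction N with
    | zero => simp
    | succ N ih =>
      calc 2 * q * ∑ t ∈ range (N + 1), P (E t)
          = 2 * q * ∑ t ∈ range N, P (E t) + (q * P (E N) + q * P (E N)) := by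
            rw [sum_range_succ]; ring
        _ ≤ ∫⁻ ω, Φ N ω ∂P + (P (E N ∩ A N) + P (E N ∩ B N)) := by
            rw [hqA, hqB]; gcongr
        _ = ∫⁻ ω, Φ N ω + (E N ∩ A N).indicator 1 ω + (E N ∩ B N).indicator 1 ω ∂P := by
            rw [lintegral_add_right _ (measurable_one.indicator ((hE N).inter (hB N))),
              lintegral_add_right _ (measurable_one.indicator ((hE N).inter (hA N))),
              lintegral_indicator_one ((hE N).inter (hA N)),
              lintegral_indicator_one ((hE N).inter (hB N)), add_assoc]
        _ ≤ ∫⁻ ω, Φ (N + 1) ω ∂P :=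
            lintegral_mono fun ω ↦ hitPotential_add_indicator_le (hstep N ω)
  have bounded : ∀ N, ∫⁻ ω, Φ N ω ∂P ≤ k := fun N ↦ by
    calc ∫⁻ ω, Φ N ω ∂P ≤ ∫⁻ _, (k : ℝ≥0∞) ∂P :=
          lintegral_mono fun ω ↦ Nat.cast_le.2 (hitPotential_le k _)
      _ = k := by simp
  rw [ENNReal.tsum_eq_iSup_nat, ENNReal.mul_iSup]
  exact iSup_le fun N ↦ (growth N).trans (bounded N)

end Drift

section RandomSelection

variable {Ω ι : Type*} {m : MeasurableSpace Ω} {q : Ω → ι} {A : ι → Set Ω}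

lemma setOf_mem_eq_iUnion : {ω | ω ∈ A (q ω)} = ⋃ i, q ⁻¹' {i} ∩ A i := by
  ext ω; simp

variable [Countable ι] [MeasurableSpace ι] [MeasurableSingletonClass ι]

lemma measurableSet_setOf_mem (hq : Measurable[m] q) (hA : ∀ i, MeasurableSet[m] (A i)) :
    MeasurableSet[m] {ω | ω ∈ A (q ω)} := by
  rw [setOf_mem_eq_iUnion]
  exact .iUnion fun i ↦ (hq (measurableSet_singleton i)).inter (hA i)

lemma measure_inter_setOf_mem_eq {mΩ : MeasurableSpace Ω} {P : Measure Ω} {c : ℝ≥0∞}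
    (hm : m ≤ mΩ) (hq : Measurable[m] q) (hA : ∀ i, MeasurableSet (A i))
    (hind : ∀ i C, MeasurableSet[m] C → P (C ∩ A i) = c * P C) {C : Set Ω}
    (hC : MeasurableSet[m] C) :
    P (C ∩ {ω | ω ∈ A (q ω)}) = c * P C := by
  have hfib : ∀ i, MeasurableSet[m] (C ∩ q ⁻¹' {i}) :=
    fun i ↦ hC.inter (hq (measurableSet_singleton i))
  have hdisj : Pairwise (Function.onFun Disjoint fun i ↦ C ∩ q ⁻¹' {i}) := fun i j hij ↦
    ((Set.disjoint_singleton.2 hij).preimage q).mono Set.inter_subset_right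
      Set.inter_subset_right
  calc P (C ∩ {ω | ω ∈ A (q ω)}) = P (⋃ i, C ∩ q ⁻¹' {i} ∩ A i) := by
        rw [setOf_mem_eq_iUnion, Set.inter_iUnion]
        simp only [Set.inter_assoc]
    _ = ∑' i, P (C ∩ q ⁻¹' {i} ∩ A i) :=
        measure_iUnion (fun i j hij ↦ (hdisj hij).mono Set.inter_subset_left
          Set.inter_subset_left) fun i ↦ (hm _ (hfib i)).inter (hA i)
    _ = ∑' i, c * P (C ∩ q ⁻¹' {i}) := tsum_congr fun i ↦ hind i _ (hfib i)
    _ = c * P C := by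
        rw [ENNReal.tsum_mul_left, ← measure_iUnion hdisj fun i ↦ hm _ (hfib i),
          ← Set.inter_iUnion, ← Set.preimage_iUnion, Set.iUnion_of_singleton,
          Set.preimage_univ, Set.inter_univ]

end RandomSelection

section Coins

variable {V Ω : Type} {coin : ℕ → V → V → Ω → Bool}

abbrev coinsBefore (coin : ℕ → V → V → Ω → Bool) (t : ℕ) : MeasurableSpace Ω :=
  ⨆ j ∈ {j : ℕ × V × V | j.1 < t},
    MeasurableSpace.comap (coin j.1 j.2.1 j.2.2) inferInstance

lemma measurable_coin_of_lt {s t : ℕ} (h : s < t) (u v : V) :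
    Measurable[coinsBefore coin t] (coin s u v) :=
  measurable_iff_comap_le.2 <| le_iSup₂ (f := fun (j : ℕ × V × V) (_ : j.1 < t) ↦
    MeasurableSpace.comap (coin j.1 j.2.1 j.2.2) inferInstance) (s, u, v) h

lemma coinsBefore_mono : Monotone (coinsBefore coin) := fun _ _ hst ↦
  iSup₂_le fun j hj ↦ (measurable_coin_of_lt (lt_of_lt_of_le hj hst) j.2.1 j.2.2).comap_le

variable [MeasurableSpace Ω]

lemma coinsBefore_le (hm : ∀ t u v, Measurable (coin t u v)) (t : ℕ) :
    coinsBefore coin t ≤ ‹MeasurableSpace Ω› :=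
  iSup₂_le fun j _ ↦ (hm j.1 j.2.1 j.2.2).comap_le

lemma measure_inter_coin_eq {P : Measure Ω} {p : ℝ} (hcoin : PropagationCoins coin P p)
    {t : ℕ} (u v : V) {C : Set Ω} (hC : MeasurableSet[coinsBefore coin t] C) :
    P (C ∩ {ω | coin t u v ω = true}) = ENNReal.ofReal p * P C := by
  obtain ⟨hm, hind, hp⟩ := hcoin
  have hdisj : Disjoint {j : ℕ × V × V | j.1 < t} {(t, u, v)} := by simp
  have hIndep := indep_iSup_of_disjoint (fun j ↦ (hm j.1 j.2.1 j.2.2).comap_le)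
    ((iIndepFun_iff_iIndep _ _ _).1 hind) hdisj
  rw [iSup_singleton] at hIndep
  rw [(Indep_iff _ _ _).1 hIndep C {ω | coin t u v ω = true} hC ⟨{true}, trivial, rfl⟩, hp,
    mul_comm]

end Coins

section PathFrontier

variable {V Ω : Type} (coin : ℕ → V → V → Ω → Bool) (path : ℕ → V)

/-- A lower bound for the informed part of `path` that only ever looks at the coin of the edge
just ahead of it, so that its advance in round `t` is a fresh coin independent of the past. -/
def pathFrontier : ℕ → Ω → ℕ
  | 0, _ => 0
  | t + 1, ω => pathFrontier t ω +
      (coin t (path (pathFrontier t ω)) (path (pathFrontier t ω + 1)) ω).toNat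

def pathEdgeFires (t n : ℕ) : Set Ω := {ω | coin t (path n) (path (n + 1)) ω = true}

def frontierAdvance (t : ℕ) : Set Ω :=
  {ω | ω ∈ pathEdgeFires coin path t (pathFrontier coin path t ω)}

lemma pathFrontier_succ (t : ℕ) (ω : Ω) :
    pathFrontier coin path (t + 1) ω =
      pathFrontier coin path t ω + (frontierAdvance coin path t).indicator 1 ω := by
  simp only [pathFrontier, frontierAdvance, pathEdgeFires, Set.indicator_apply, Set.mem_ofPred_eq,
    Pi.one_apply]
  split_ifs <;> simp_all

lemma informed_of_le_pathFrontier {E : V → V → Prop} {v0 : V} (h0 : path 0 = v0)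
    (hpath : ∀ n, E (path n) (path (n + 1))) {ω : Ω} {t i : ℕ}
    (hi : i ≤ pathFrontier coin path t ω) : informed E coin v0 t (path i) ω := by
  induction t generalizing i with
  | zero => simp_all [pathFrontier, informed]
  | succ t ih =>
    by_cases hle : i ≤ pathFrontier coin path t ω
    · exact .inl (ih hle)
    obtain ⟨rfl, hadv⟩ :
        i = pathFrontier coin path t ω + 1 ∧ ω ∈ frontierAdvance coin path t := by
      rw [pathFrontier_succ] at hi
      by_cases hadv : ω ∈ frontierAdvance coin path t
      · simp only [Set.indicator_of_mem hadv, Pi.one_apply] at hi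
        exact ⟨by omega, hadv⟩
      · simp only [Set.indicator_of_notMem hadv] at hi
        omega
    exact .inr ⟨_, hpath _, ih le_rfl, hadv⟩

lemma measurableSet_pathEdgeFires {t s : ℕ} (h : s < t) (n : ℕ) :
    MeasurableSet[coinsBefore coin t] (pathEdgeFires coin path s n) :=
  measurable_coin_of_lt h _ _ (measurableSet_singleton true)

lemma measurable_pathFrontier (t : ℕ) :
    Measurable[coinsBefore coin t] (pathFrontier coin path t) := by
  induction t with
  | zero => exact measurable_const
  | succ t ih =>
    have hmono := coinsBefore_mono (coin := coin) t.le_succ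
    have hadv : MeasurableSet[coinsBefore coin (t + 1)] (frontierAdvance coin path t) :=
      measurableSet_setOf_mem (ih.mono hmono le_rfl)
        (measurableSet_pathEdgeFires coin path t.lt_succ_self)
    rw [funext (pathFrontier_succ coin path t)]
    exact (ih.mono hmono le_rfl).add (measurable_const.indicator hadv)

variable {coin} [MeasurableSpace Ω]

lemma measurableSet_frontierAdvance (hm : ∀ t u v, Measurable (coin t u v)) (t : ℕ) :
    MeasurableSet (frontierAdvance coin path t) :=
  measurableSet_setOf_mem ((measurable_pathFrontier coin path t).mono (coinsBefore_le hm t) le_rfl)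
    fun n ↦ coinsBefore_le hm (t + 1) _ (measurableSet_pathEdgeFires coin path t.lt_succ_self n)

lemma measure_inter_frontierAdvance {P : Measure Ω} {p : ℝ} (hcoin : PropagationCoins coin P p)
    {t : ℕ} {C : Set Ω} (hC : MeasurableSet[coinsBefore coin t] C) :
    P (C ∩ frontierAdvance coin path t) = ENNReal.ofReal p * P C :=
  measure_inter_setOf_mem_eq (A := pathEdgeFires coin path t) (coinsBefore_le hcoin.1 t)
    (measurable_pathFrontier coin path t)
    (fun _ ↦ hcoin.1 _ _ _ (measurableSet_singleton true))
    (fun _ _ ↦ measure_inter_coin_eq hcoin _ _) hC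

end PathFrontier

section Ring

variable {μ : ℕ}

lemma fromRel_adj_add_one (h : (1 : ZMod μ) ≠ 0) (x : ZMod μ) :
    (SimpleGraph.fromRel fun u v : ZMod μ ↦ v = u + 1).Adj x (x + 1) := by
  simpa [SimpleGraph.fromRel_adj] using h

lemma fromRel_adj_sub_one (h : (1 : ZMod μ) ≠ 0) (x : ZMod μ) :
    (SimpleGraph.fromRel fun u v : ZMod μ ↦ v = u + 1).Adj x (x - 1) := by
  simpa using (fromRel_adj_add_one h (x - 1)).symm

lemma le_natCard_of_arc_subset [NeZero μ] {I : Set (ZMod μ)} {v0 : ZMod μ} {r l k : ℕ}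
    (hk : k ≤ μ) (hkrl : k ≤ r + l + 1) (hr : ∀ i ≤ r, v0 + i ∈ I)
    (hl : ∀ j ≤ l, v0 - j ∈ I) :
    k ≤ Nat.card I := by
  let f : Fin k → I := fun i ↦ ⟨v0 + r - i, by
    rcases le_total (i : ℕ) r with h | h
    · simpa [Nat.cast_sub h, add_sub_assoc] using hr (r - i) (Nat.sub_le _ _)
    · simpa [Nat.cast_sub h, sub_sub_eq_add_sub] using hl (i - r) (by omega)⟩
  have hf : Function.Injective f := fun i j hij ↦ by
    have hcast : ((i : ℕ) : ZMod μ) = (j : ℕ) := by simpa [f] using hij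
    rw [ZMod.natCast_eq_natCast_iff', Nat.mod_eq_of_lt (i.2.trans_le hk),
      Nat.mod_eq_of_lt (j.2.trans_le hk)] at hcast
    exact Fin.ext hcast
  simpa using Nat.card_le_card_of_injective f hf

end Ring

theorem propagation_ring_general {Ω : Type} [MeasurableSpace Ω]
    (P : Measure Ω) [IsProbabilityMeasure P] (p : ℝ) (hp0 : 0 < p)
    (μ : ℕ) [NeZero μ] (hμ : 3 ≤ μ) (v0 : ZMod μ)
    (coin : ℕ → ZMod μ → ZMod μ → Ω → Bool) (hcoin : PropagationCoins coin P p)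
    (k : ℕ) (hk2 : k ≤ μ) :
    ∫⁻ ω, (⨅ (t : ℕ) (_ : k ≤ Nat.card {v : ZMod μ //
        informed (SimpleGraph.fromRel fun u v : ZMod μ => v = u + 1).Adj coin v0 t v ω}),
      (t : ℝ≥0∞)) ∂P ≤ ENNReal.ofReal (k / (2 * p)) := by
  have hone : (1 : ZMod μ) ≠ 0 := by
    have : Fact (1 < μ) := ⟨by omega⟩
    exact one_ne_zero
  set right := pathFrontier coin fun n : ℕ ↦ v0 + n with hright
  set left := pathFrontier coin fun n : ℕ ↦ v0 - n with hleft
  set E : ℕ → Set Ω := fun t ↦ {ω | (right + left) t ω + 1 < k}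
  have hS : ∀ t, Measurable[coinsBefore coin t] ((right + left) t) := fun t ↦
    (measurable_pathFrontier coin _ t).add (measurable_pathFrontier coin _ t)
  have hE : ∀ t, MeasurableSet[coinsBefore coin t] (E t) :=
    fun t ↦ hS t (.of_discrete (s := {n | n + 1 < k}))
  have hit : ∀ t ω, ω ∉ E t → k ≤ Nat.card {v // informed (SimpleGraph.fromRel
      fun u v : ZMod μ ↦ v = u + 1).Adj coin v0 t v ω} := fun t ω hkrl ↦
    le_natCard_of_arc_subset hk2 (not_lt.1 hkrl)
      (fun _ hi ↦ informed_of_le_pathFrontier _ _ (by simp)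
        (fun n ↦ by simpa [add_assoc] using fromRel_adj_add_one hone (v0 + n)) hi)
      (fun _ hj ↦ informed_of_le_pathFrontier _ _ (by simp)
        (fun n ↦ by simpa [sub_sub] using fromRel_adj_sub_one hone (v0 - n)) hj)
  have hdrift : 2 * ENNReal.ofReal p * ∑' t, P (E t) ≤ k :=
    two_mul_tsum_measure_le (fun t ↦ (hS t).mono (coinsBefore_le hcoin.1 t) le_rfl)
      (measurableSet_frontierAdvance (fun n : ℕ ↦ v0 + n) hcoin.1)
      (measurableSet_frontierAdvance (fun n : ℕ ↦ v0 - n) hcoin.1)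
      (fun t ω ↦ by simp only [hright, hleft, Pi.add_apply, pathFrontier_succ]; omega)
      (fun t ↦ measure_inter_frontierAdvance _ hcoin (hE t))
      (fun t ↦ measure_inter_frontierAdvance _ hcoin (hE t))
  calc _ ≤ ∫⁻ ω, ∑' t, (E t).indicator 1 ω ∂P :=
        lintegral_mono fun ω ↦ iInf_natCast_le_tsum_indicator (hit · ω)
    _ = ∑' t, P (E t) := by
        have hE' := fun t ↦ coinsBefore_le hcoin.1 t _ (hE t)
        rw [lintegral_tsum fun t ↦ (measurable_one.indicator (hE' t)).aemeasurable]
        exact tsum_congr fun t ↦ lintegral_indicator_one (hE' t)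
    _ ≤ k / (2 * ENNReal.ofReal p) := by
        rw [ENNReal.le_div_iff_mul_le (by simp [hp0]) (by simp), mul_comm]
        exact hdrift
    _ = ENNReal.ofReal (k / (2 * p)) := by
        rw [ENNReal.ofReal_div_of_pos (by positivity), ENNReal.ofReal_natCast,
          ENNReal.ofReal_mul zero_le_two, ENNReal.ofReal_ofNat]

/-- **Propagation on the bidirectional ring.** On the undirected cycle graph with `μ ≥ 3`
vertices, for every `1 ≤ k ≤ μ` the expected number of rounds until at least `k` vertices are
informed is at most `k / (2p)`. -/
theorem propagation_ring {Ω : Type} [MeasurableSpace Ω]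
    (P : Measure Ω) [IsProbabilityMeasure P] (p : ℝ) (hp0 : 0 < p) (hp1 : p ≤ 1)
    (μ : ℕ) [NeZero μ] (hμ : 3 ≤ μ) (v0 : ZMod μ)
    (coin : ℕ → ZMod μ → ZMod μ → Ω → Bool) (hcoin : PropagationCoins coin P p)
    (k : ℕ) (hk1 : 1 ≤ k) (hk2 : k ≤ μ) :
    ∫⁻ ω, (⨅ (t : ℕ) (_ : k ≤ Nat.card {v : ZMod μ //
        informed (SimpleGraph.fromRel fun u v : ZMod μ => v = u + 1).Adj coin v0 t v ω}),
      (t : ℝ≥0∞)) ∂P ≤ ENNReal.ofReal (k / (2 * p)) :=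
  propagation_ring_general P p hp0 μ hμ v0 coin hcoin k hk2
end

section
/- Consider the randomized information propagation process with transmission probability p on the d-dimensional hypercube graph Q_d, starting at any vertex v*. For every integer k with 0 ≤ k ≤ d, the expected number of rounds until at least 2^k vertices are informed is at most 24(k+1)/p. -/
open MeasureTheory ProbabilityTheory ENNReal

/-!
Let `T` be the first round in which `2^k` vertices are informed. Every vertex of the subcube of
vertices that agree with `v*` outside the first `k` coordinates is reached from `v*` by a lazy walk
of `k` steps, each step flipping at most one bit. In every round the information advances one
further step along the walk with probability `p`, independently of the past, so after `t` rounds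
the vertex is still uninformed with probability at most `ℙ[Bin(t, p) < k] ≤ 2^k (1 - p/2)^t`.
A union bound over the `2^k` vertices of the subcube gives `ℙ[T > t] ≤ min(1, 4^k (1 - p/2)^t)`,
and summing these tail probabilities gives `𝔼[T] ≤ ⌈4k/p⌉ + 2/p`.
-/

section Informed

variable {V Ω : Type} {E : V → V → Prop} {coin : ℕ → V → V → Ω → Bool} {v0 : V}

def CoinsAgreeBefore (coin : ℕ → V → V → Ω → Bool) (t : ℕ) (ω ω' : Ω) : Prop :=
  ∀ s < t, ∀ u w, coin s u w ω = coin s u w ω'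

theorem CoinsAgreeBefore.symm {t : ℕ} {ω ω' : Ω} (h : CoinsAgreeBefore coin t ω ω') :
    CoinsAgreeBefore coin t ω' ω :=
  fun s hs u w => (h s hs u w).symm

theorem informed_start (t : ℕ) (ω : Ω) : informed E coin v0 t v0 ω := by
  induction t with
  | zero => rfl
  | succ t ih => exact Or.inl ih

theorem informed_mono {s t : ℕ} (hst : s ≤ t) {v : V} {ω : Ω}
    (h : informed E coin v0 s v ω) : informed E coin v0 t v ω :=
  Nat.le_induction h (fun _ _ ih => Or.inl ih) t hst

theorem informed_succ_of_step {t : ℕ} {a b : V} {ω : Ω} (h : informed E coin v0 t a ω)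
    (hab : a = b ∨ E a b) (hc : coin t a b ω = true) : informed E coin v0 (t + 1) b ω := by
  rcases hab with rfl | hE
  · exact Or.inl h
  · exact Or.inr ⟨a, hE, h, hc⟩

theorem informed_congr {t : ℕ} {v : V} {ω ω' : Ω} (hc : CoinsAgreeBefore coin t ω ω')
    (h : informed E coin v0 t v ω) : informed E coin v0 t v ω' := by
  induction t generalizing v with
  | zero => exact h
  | succ t ih =>
    have hc' : CoinsAgreeBefore coin t ω ω' := fun s hs => hc s (by omega)
    rcases h with h | ⟨u, hE, hu, hcoin⟩
    · exact Or.inl (ih hc' h)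
    · exact Or.inr ⟨u, hE, ih hc' hu, hc t (by omega) u v ▸ hcoin⟩

theorem measurableSet_informed [MeasurableSpace Ω] [Countable V]
    (hm : ∀ t u v, Measurable (coin t u v)) (t : ℕ) (v : V) :
    MeasurableSet {ω | informed E coin v0 t v ω} := by
  induction t generalizing v with
  | zero => exact MeasurableSet.const _
  | succ t ih =>
    simp only [informed, Set.ofPred_or, Set.ofPred_exists, Set.ofPred_and]
    exact (ih v).union <| .iUnion fun u =>
      (MeasurableSet.const _).inter ((ih u).inter (hm t u v (measurableSet_singleton true)))

/-- Splitting the coins into those of rounds `< t` and the single coin `(t, a, b)`: the two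
families are independent, and an event determined by the former is a preimage of a subset of the
finite space `range t × V × V → Bool`, hence measurable there. -/
theorem PropagationCoins.measure_inter_coin_eq_mul [MeasurableSpace Ω] [Fintype V]
    {P : Measure Ω} {p : ℝ} (hc : PropagationCoins coin P p) {t : ℕ} (a b : V) {D : Set Ω}
    (hD : ∀ ω ω', CoinsAgreeBefore coin t ω ω' → ω ∈ D → ω' ∈ D) :
    P (D ∩ {ω | coin t a b ω = true}) = P D * ENNReal.ofReal p := by
  classical
  let S : Finset (ℕ × V × V) := Finset.range t ×ˢ Finset.univ
  let T : Finset (ℕ × V × V) := {(t, a, b)}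
  have hST : Disjoint S T := by
    simp [S, T]
  have hind := hc.2.1.indepFun_finset S T hST fun i => hc.1 i.1 i.2.1 i.2.2
  let past : Ω → S → Bool := fun ω i => coin i.1.1 i.1.2.1 i.1.2.2 ω
  let present : Ω → T → Bool := fun ω i => coin i.1.1 i.1.2.1 i.1.2.2 ω
  have hDeq : D = past ⁻¹' (past '' D) := by
    refine (Set.subset_preimage_image _ _).antisymm ?_
    rintro ω ⟨ω', hω', heq⟩
    exact hD ω' ω (fun s hs u w => congrFun heq ⟨(s, u, w), by simp [S, hs]⟩) hω'
  have hCeq : {ω | coin t a b ω = true}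
      = present ⁻¹' {f | f ⟨(t, a, b), Finset.mem_singleton_self _⟩ = true} := rfl
  rw [hCeq, hDeq, indepFun_iff_measure_inter_preimage_eq_mul.mp hind _ _
    (Set.toFinite _).measurableSet (Set.toFinite _).measurableSet, ← hCeq, hc.2.2]

theorem PropagationCoins.ofReal_le_one [MeasurableSpace Ω] {P : Measure Ω}
    [IsProbabilityMeasure P] {p : ℝ} (hc : PropagationCoins coin P p) (t : ℕ) (a b : V) :
    ENNReal.ofReal p ≤ 1 :=
  hc.2.2 t a b ▸ prob_le_one

end Informed

/-- `binomLT pe t j = ℙ[Bin(t, pe) < j]`, by conditioning on the outcome of one trial. -/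
noncomputable def binomLT (pe : ℝ≥0∞) : ℕ → ℕ → ℝ≥0∞
  | _, 0 => 0
  | 0, _ + 1 => 1
  | t + 1, j + 1 => (1 - pe) * binomLT pe t (j + 1) + pe * binomLT pe t j

/-- Markov's inequality for `2 ^ (-Bin(t, p))`, whose mean is `(1 - p/2)^t`. -/
theorem binomLT_le {p : ℝ} (hp0 : 0 ≤ p) (hp1 : p ≤ 1) (t j : ℕ) :
    binomLT (ENNReal.ofReal p) t j ≤ 2 ^ j * ENNReal.ofReal (1 - p / 2) ^ t := by
  have hstep : (1 - ENNReal.ofReal p) * 2 + ENNReal.ofReal p = 2 * ENNReal.ofReal (1 - p / 2) := by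
    rw [← ENNReal.ofReal_one, ← ENNReal.ofReal_sub _ hp0, ← ENNReal.ofReal_ofNat 2,
      ← ENNReal.ofReal_mul (by linarith), ← ENNReal.ofReal_add (by nlinarith) hp0,
      ← ENNReal.ofReal_mul (by norm_num)]
    ring_nf
  induction t generalizing j with
  | zero =>
    cases j with
    | zero => simp [binomLT]
    | succ j => simpa [binomLT] using one_le_pow₀ (one_le_two : (1 : ℝ≥0∞) ≤ 2)
  | succ t ih =>
    cases j with
    | zero => simp [binomLT]
    | succ j =>
      rw [binomLT]
      calc _ ≤ (1 - ENNReal.ofReal p) * (2 ^ (j + 1) * ENNReal.ofReal (1 - p / 2) ^ t)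
            + ENNReal.ofReal p * (2 ^ j * ENNReal.ofReal (1 - p / 2) ^ t) := by
            gcongr <;> apply ih
        _ = 2 ^ j * ENNReal.ofReal (1 - p / 2) ^ t
            * ((1 - ENNReal.ofReal p) * 2 + ENNReal.ofReal p) := by ring
        _ = 2 ^ (j + 1) * ENNReal.ofReal (1 - p / 2) ^ (t + 1) := by rw [hstep]; ring

section Walk

variable {V Ω : Type} {E : V → V → Prop} {coin : ℕ → V → V → Ω → Bool} {v0 : V}

def walkInformed (E : V → V → Prop) (coin : ℕ → V → V → Ω → Bool) (v0 : V) (u : ℕ → V)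
    (t j : ℕ) : Set Ω :=
  {ω | ∀ i ≤ j, informed E coin v0 t (u i) ω}

variable {u : ℕ → V}

theorem walkInformed_succ_subset (t j : ℕ) :
    walkInformed E coin v0 u t (j + 1) ⊆ walkInformed E coin v0 u t j :=
  fun _ hω i hi => hω i (by omega)

theorem walkInformed_zero (hu0 : u 0 = v0) (t : ℕ) :
    walkInformed E coin v0 u t 0 = Set.univ :=
  Set.eq_univ_of_forall fun ω i hi => by
    rw [Nat.le_zero.mp hi, hu0]
    exact informed_start t ω

theorem walkInformed_congr {t j : ℕ} {ω ω' : Ω} (hc : CoinsAgreeBefore coin t ω ω')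
    (h : ω ∈ walkInformed E coin v0 u t j) : ω' ∈ walkInformed E coin v0 u t j :=
  fun i hi => informed_congr hc (h i hi)

theorem measurableSet_walkInformed [MeasurableSpace Ω] [Countable V]
    (hm : ∀ t u v, Measurable (coin t u v)) (t j : ℕ) :
    MeasurableSet (walkInformed E coin v0 u t j) := by
  simp only [walkInformed, Set.ofPred_forall]
  exact .iInter fun i => .iInter fun _ => measurableSet_informed hm t (u i)

variable [MeasurableSpace Ω] [Fintype V] {P : Measure Ω} [IsProbabilityMeasure P] {p : ℝ}

/-- If the walk's first `j + 1` vertices but not the next one are informed at time `t`, the next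
one becomes informed with probability `p`, independently of the past. -/
theorem measure_walkInformed_succ_succ_ge (hcoin : PropagationCoins coin P p) {j : ℕ}
    (hstep : u j = u (j + 1) ∨ E (u j) (u (j + 1))) (t : ℕ) :
    (1 - ENNReal.ofReal p) * P (walkInformed E coin v0 u t (j + 1))
      + ENNReal.ofReal p * P (walkInformed E coin v0 u t j)
      ≤ P (walkInformed E coin v0 u (t + 1) (j + 1)) := by
  set W := walkInformed E coin v0 u
  set pe := ENNReal.ofReal p
  have hmeas := measurableSet_walkInformed (E := E) (v0 := v0) (u := u) hcoin.1 t
  let D := W t j \ W t (j + 1)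
  let C := {ω | coin t (u j) (u (j + 1)) ω = true}
  have hDC : P (D ∩ C) = P D * pe :=
    hcoin.measure_inter_coin_eq_mul _ _ fun ω ω' hc hω =>
      ⟨walkInformed_congr hc hω.1, fun h => hω.2 (walkInformed_congr hc.symm h)⟩
  have hD : P D = P (W t j) - P (W t (j + 1)) :=
    measure_sdiff (walkInformed_succ_subset t j) (hmeas _).nullMeasurableSet (measure_ne_top _ _)
  have hsub : W t (j + 1) ∪ (D ∩ C) ⊆ W (t + 1) (j + 1) := by
    rintro ω (hω | ⟨⟨hωj, -⟩, hωC⟩) i hi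
    · exact informed_mono t.le_succ (hω i hi)
    · rcases Nat.lt_or_eq_of_le hi with hi | rfl
      · exact informed_mono t.le_succ (hωj i (by omega))
      · exact informed_succ_of_step (hωj j le_rfl) hstep hωC
  have hdisj : Disjoint (W t (j + 1)) (D ∩ C) :=
    Set.disjoint_left.mpr fun _ hω hωDC => hωDC.1.2 hω
  have hx_le_y : P (W t (j + 1)) ≤ P (W t j) := measure_mono (walkInformed_succ_subset t j)
  calc (1 - pe) * P (W t (j + 1)) + pe * P (W t j)
      = (1 - pe) * P (W t (j + 1)) + pe * (P (W t (j + 1)) + P D) := by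
        rw [hD, add_tsub_cancel_of_le hx_le_y]
    _ = ((1 - pe) + pe) * P (W t (j + 1)) + P D * pe := by ring
    _ = P (W t (j + 1) ∪ (D ∩ C)) := by
        rw [tsub_add_cancel_of_le (hcoin.ofReal_le_one t (u j) (u (j + 1))), one_mul, ← hDC,
          measure_union hdisj (((hmeas j).diff (hmeas (j + 1))).inter
            (hcoin.1 t (u j) (u (j + 1)) (measurableSet_singleton true)))]
    _ ≤ P (W (t + 1) (j + 1)) := measure_mono hsub

theorem one_le_measure_walkInformed_add_binomLT (hcoin : PropagationCoins coin P p)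
    (hu0 : u 0 = v0) (hstep : ∀ j, u j = u (j + 1) ∨ E (u j) (u (j + 1))) (t j : ℕ) :
    1 ≤ P (walkInformed E coin v0 u t j) + binomLT (ENNReal.ofReal p) t j := by
  set pe := ENNReal.ofReal p
  induction t generalizing j with
  | zero =>
    cases j with
    | zero => simp [walkInformed_zero hu0]
    | succ j => exact le_add_self
  | succ t ih =>
    cases j with
    | zero => simp [walkInformed_zero hu0]
    | succ j =>
      calc (1 : ℝ≥0∞) = (1 - pe) * 1 + pe * 1 := by
            rw [mul_one, mul_one, tsub_add_cancel_of_le (hcoin.ofReal_le_one 0 v0 v0)]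
        _ ≤ (1 - pe) * (P (walkInformed E coin v0 u t (j + 1)) + binomLT pe t (j + 1))
            + pe * (P (walkInformed E coin v0 u t j) + binomLT pe t j) := by
            gcongr <;> apply ih
        _ = ((1 - pe) * P (walkInformed E coin v0 u t (j + 1))
              + pe * P (walkInformed E coin v0 u t j)) + binomLT pe (t + 1) (j + 1) := by
            rw [binomLT]; ring
        _ ≤ _ := by gcongr; exact measure_walkInformed_succ_succ_ge hcoin (hstep j) t

theorem measure_not_informed_le_binomLT (hcoin : PropagationCoins coin P p)
    (hu0 : u 0 = v0) (hstep : ∀ j, u j = u (j + 1) ∨ E (u j) (u (j + 1))) (t j : ℕ) :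
    P {ω | ¬ informed E coin v0 t (u j) ω} ≤ binomLT (ENNReal.ofReal p) t j :=
  calc P {ω | ¬ informed E coin v0 t (u j) ω}
      ≤ P (walkInformed E coin v0 u t j)ᶜ := measure_mono fun _ hω h => hω (h j le_rfl)
    _ = 1 - P (walkInformed E coin v0 u t j) :=
        prob_compl_eq_one_sub (measurableSet_walkInformed hcoin.1 t j)
    _ ≤ _ := by
        rw [tsub_le_iff_right, add_comm]
        exact one_le_measure_walkInformed_add_binomLT hcoin hu0 hstep t j

end Walk

section Hypercube

def hypercube (d : ℕ) : SimpleGraph (Fin d → Bool) :=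
  SimpleGraph.fromRel fun u v : Fin d → Bool => Nat.card {i : Fin d // u i ≠ v i} = 1

variable {d : ℕ}

theorem hypercube_eq_or_adj {u u' : Fin d → Bool} (h : {i | u i ≠ u' i}.Subsingleton) :
    u = u' ∨ (hypercube d).Adj u u' := by
  by_cases heq : u = u'
  · exact Or.inl heq
  · obtain ⟨i, hi⟩ := Function.ne_iff.mp heq
    exact Or.inr ⟨heq, Or.inl (Nat.card_eq_one_iff_exists.mpr
      ⟨⟨i, hi⟩, fun j => Subtype.ext (h j.2 hi)⟩)⟩

def hypercubeWalk (v0 v : Fin d → Bool) (j : ℕ) : Fin d → Bool :=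
  fun i => if (i : ℕ) < j then v i else v0 i

theorem hypercubeWalk_zero (v0 v : Fin d → Bool) : hypercubeWalk v0 v 0 = v0 := rfl

theorem hypercubeWalk_of_forall_le {v0 v : Fin d → Bool} {j : ℕ}
    (hv : ∀ i : Fin d, j ≤ i → v i = v0 i) : hypercubeWalk v0 v j = v := by
  funext i
  unfold hypercubeWalk
  split_ifs with h
  · rfl
  · exact (hv i (by omega)).symm

theorem hypercubeWalk_step (v0 v : Fin d → Bool) (j : ℕ) :
    hypercubeWalk v0 v j = hypercubeWalk v0 v (j + 1)
      ∨ (hypercube d).Adj (hypercubeWalk v0 v j) (hypercubeWalk v0 v (j + 1)) := by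
  refine hypercube_eq_or_adj fun i hi i' hi' => ?_
  have key : ∀ i : Fin d, hypercubeWalk v0 v j i ≠ hypercubeWalk v0 v (j + 1) i → (i : ℕ) = j := by
    intro i hi
    unfold hypercubeWalk at hi
    split_ifs at hi <;> first | omega | exact absurd rfl hi
  exact Fin.ext ((key i hi).trans (key i' hi').symm)

def subcubeEmbedding (v0 : Fin d → Bool) (k : ℕ) (b : Fin k → Bool) : Fin d → Bool :=
  fun i => if h : (i : ℕ) < k then b ⟨i, h⟩ else v0 i

theorem subcubeEmbedding_of_le (v0 : Fin d → Bool) {k : ℕ} (b : Fin k → Bool) (i : Fin d)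
    (hi : k ≤ i) : subcubeEmbedding v0 k b i = v0 i :=
  dif_neg (by omega)

theorem subcubeEmbedding_injective (v0 : Fin d → Bool) {k : ℕ} (hk : k ≤ d) :
    Function.Injective (subcubeEmbedding v0 k) := by
  intro b b' h
  funext i
  simpa [subcubeEmbedding] using congrFun h ⟨i, i.2.trans_le hk⟩

theorem two_pow_le_card_of_subcubeEmbedding {k : ℕ} (hk : k ≤ d) {v0 : Fin d → Bool}
    {s : (Fin d → Bool) → Prop} (h : ∀ b, s (subcubeEmbedding v0 k b)) :
    2 ^ k ≤ Nat.card {v // s v} :=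
  calc 2 ^ k = Nat.card (Fin k → Bool) := by simp
    _ ≤ _ := Nat.card_le_card_of_injective (fun b => ⟨_, h b⟩) fun _ _ hbb =>
        subcubeEmbedding_injective v0 hk (congrArg Subtype.val hbb)

variable {Ω : Type} [MeasurableSpace Ω] {P : Measure Ω} [IsProbabilityMeasure P] {p : ℝ}
  {v0 : Fin d → Bool} {coin : ℕ → (Fin d → Bool) → (Fin d → Bool) → Ω → Bool}

theorem measure_subcube_not_informed_le (hcoin : PropagationCoins coin P p) (hp0 : 0 ≤ p)
    (hp1 : p ≤ 1) (k t : ℕ) :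
    P (⋃ b : Fin k → Bool, {ω | ¬ informed (hypercube d).Adj coin v0 t (subcubeEmbedding v0 k b) ω})
      ≤ 4 ^ k * ENNReal.ofReal (1 - p / 2) ^ t :=
  calc _ ≤ ∑ b : Fin k → Bool,
        P {ω | ¬ informed (hypercube d).Adj coin v0 t (subcubeEmbedding v0 k b) ω} :=
        measure_iUnion_fintype_le _ _
    _ ≤ ∑ _b : Fin k → Bool, 2 ^ k * ENNReal.ofReal (1 - p / 2) ^ t := by
        refine Finset.sum_le_sum fun b _ => ?_
        rw [← hypercubeWalk_of_forall_le (subcubeEmbedding_of_le v0 b)]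
        exact (measure_not_informed_le_binomLT hcoin (hypercubeWalk_zero v0 _)
          (hypercubeWalk_step v0 _) t k).trans (binomLT_le hp0 hp1 t k)
    _ = 4 ^ k * ENNReal.ofReal (1 - p / 2) ^ t := by
        rw [Finset.sum_const, Finset.card_univ, Fintype.card_fun, Fintype.card_bool,
          Fintype.card_fin, nsmul_eq_mul, ← mul_assoc]
        norm_num [← mul_pow]

end Hypercube

section HittingTime

variable {Ω : Type}

theorem iInf_le_tsum_indicator {good : ℕ → Prop} {bad : ℕ → Set Ω} {ω : Ω}
    (h : ∀ t, ω ∉ bad t → good t) :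
    ⨅ (t : ℕ) (_ : good t), (t : ℝ≥0∞) ≤ ∑' t, (bad t).indicator 1 ω := by
  classical
  by_cases hex : ∃ t, ω ∉ bad t
  · have hbad : ∀ s < Nat.find hex, ω ∈ bad s := fun s hs => not_not.mp (Nat.find_min hex hs)
    calc ⨅ (t : ℕ) (_ : good t), (t : ℝ≥0∞)
        ≤ Nat.find hex := biInf_le _ (h _ (Nat.find_spec hex))
      _ = ∑ s ∈ Finset.range (Nat.find hex), (bad s).indicator 1 ω := by
          rw [Finset.sum_congr rfl fun s hs =>
            Set.indicator_of_mem (hbad s (Finset.mem_range.mp hs)) 1]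
          simp
      _ ≤ ∑' t, (bad t).indicator 1 ω := ENNReal.sum_le_tsum _
  · push Not at hex
    simp [Set.indicator_of_mem (hex _)]

theorem lintegral_iInf_le_tsum_measure [MeasurableSpace Ω] {P : Measure Ω}
    {good : ℕ → Ω → Prop} {bad : ℕ → Set Ω} (hbad : ∀ t, MeasurableSet (bad t))
    (h : ∀ t ω, ω ∉ bad t → good t ω) :
    ∫⁻ ω, ⨅ (t : ℕ) (_ : good t ω), (t : ℝ≥0∞) ∂P ≤ ∑' t, P (bad t) :=
  calc _ ≤ ∫⁻ ω, ∑' t, (bad t).indicator 1 ω ∂P :=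
        lintegral_mono fun ω => iInf_le_tsum_indicator fun t => h t ω
    _ = ∑' t, P (bad t) := by
        rw [lintegral_tsum fun t => (measurable_one.indicator (hbad t)).aemeasurable]
        simp_rw [lintegral_indicator_one (hbad _)]

theorem tsum_le_add_geometric {a : ℕ → ℝ≥0∞} {C q : ℝ≥0∞} (h1 : ∀ t, a t ≤ 1)
    (hC : ∀ t, a t ≤ C * q ^ t) (t0 : ℕ) :
    ∑' t, a t ≤ t0 + C * q ^ t0 * (1 - q)⁻¹ :=
  calc ∑' t, a t = ∑ t ∈ Finset.range t0, a t + ∑' t, a (t + t0) :=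
        (ENNReal.summable.sum_add_tsum_nat_add' (k := t0)).symm
    _ ≤ ∑ _t ∈ Finset.range t0, 1 + ∑' t, C * q ^ t0 * q ^ t := by
        gcongr with t _ t
        · exact h1 t
        · exact (hC _).trans_eq (by ring)
    _ = t0 + C * q ^ t0 * (1 - q)⁻¹ := by
        rw [ENNReal.tsum_mul_left, ENNReal.tsum_geometric]
        simp

end HittingTime

theorem four_pow_mul_one_sub_half_pow_le_one {p : ℝ} (hp0 : 0 < p) (hp2 : p ≤ 2) (k : ℕ) :
    (4 : ℝ) ^ k * (1 - p / 2) ^ ⌈4 * k / p⌉₊ ≤ 1 := by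
  set t0 := ⌈4 * k / p⌉₊
  have ht0 : 4 * k ≤ t0 * p := (div_le_iff₀ hp0).mp (Nat.le_ceil _)
  have hq : 0 ≤ 1 - p / 2 := by linarith
  have h4 : (4 : ℝ) ≤ Real.exp 2 := by
    have : Real.exp 2 = Real.exp 1 * Real.exp 1 := by rw [← Real.exp_add]; norm_num
    nlinarith [Real.exp_one_gt_d9]
  calc (4 : ℝ) ^ k * (1 - p / 2) ^ t0 ≤ Real.exp 2 ^ k * Real.exp (-(p / 2)) ^ t0 :=
        mul_le_mul (pow_le_pow_left₀ (by norm_num) h4 k)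
          (pow_le_pow_left₀ hq (by linarith [Real.add_one_le_exp (-(p / 2))]) t0)
          (pow_nonneg hq t0) (by positivity)
    _ = Real.exp (2 * k - p / 2 * t0) := by
        rw [← Real.exp_nat_mul, ← Real.exp_nat_mul, ← Real.exp_add]
        ring_nf
    _ ≤ 1 := Real.exp_le_one_iff.mpr (by linarith)

theorem natCeil_add_geometric_tail_le {p : ℝ} (hp0 : 0 < p) (hp1 : p ≤ 1) (k : ℕ) :
    (⌈4 * k / p⌉₊ : ℝ≥0∞)
      + 4 ^ k * ENNReal.ofReal (1 - p / 2) ^ ⌈4 * k / p⌉₊ * (1 - ENNReal.ofReal (1 - p / 2))⁻¹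
      ≤ ENNReal.ofReal (24 * ((k : ℝ) + 1) / p) := by
  set t0 := ⌈4 * k / p⌉₊
  have hhead : 4 ^ k * ENNReal.ofReal (1 - p / 2) ^ t0 ≤ 1 := by
    rw [← ENNReal.ofReal_pow (by linarith), ← ENNReal.ofReal_ofNat 4,
      ← ENNReal.ofReal_pow (by norm_num), ← ENNReal.ofReal_mul (by positivity)]
    exact ENNReal.ofReal_le_one.mpr (four_pow_mul_one_sub_half_pow_le_one hp0 (by linarith) k)
  have hratio : (1 - ENNReal.ofReal (1 - p / 2))⁻¹ = ENNReal.ofReal (2 / p) := by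
    rw [← ENNReal.ofReal_one, ← ENNReal.ofReal_sub _ (by linarith),
      ← ENNReal.ofReal_inv_of_pos (by linarith)]
    congr 1
    ring
  have ht0 : (t0 : ℝ) * p < 4 * k + p := by
    have := Nat.ceil_lt_add_one (show 0 ≤ 4 * (k : ℝ) / p by positivity)
    rwa [← lt_div_iff₀ hp0, add_div, div_self hp0.ne']
  calc _ ≤ (t0 : ℝ≥0∞) + 1 * ENNReal.ofReal (2 / p) := by rw [← hratio]; gcongr
    _ = ENNReal.ofReal (t0 + 2 / p) := by
        rw [one_mul, ENNReal.ofReal_add (by positivity) (by positivity), ENNReal.ofReal_natCast]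
    _ ≤ ENNReal.ofReal (24 * ((k : ℝ) + 1) / p) := by
        refine ENNReal.ofReal_le_ofReal ?_
        rw [le_div_iff₀ hp0, add_mul, div_mul_cancel₀ _ hp0.ne']
        linarith

/-- **Propagation on the hypercube.** On the `d`-dimensional hypercube graph (vertices are bit
strings of length `d`, adjacent iff they differ in exactly one bit), for every `0 ≤ k ≤ d` the
expected number of rounds until at least `2^k` vertices are informed is at most
`24 (k + 1) / p`. -/
theorem propagation_hypercube {Ω : Type} [MeasurableSpace Ω]
    (P : Measure Ω) [IsProbabilityMeasure P] (p : ℝ) (hp0 : 0 < p) (hp1 : p ≤ 1)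
    (d : ℕ) (v0 : Fin d → Bool)
    (coin : ℕ → (Fin d → Bool) → (Fin d → Bool) → Ω → Bool)
    (hcoin : PropagationCoins coin P p) (k : ℕ) (hk : k ≤ d) :
    ∫⁻ ω, (⨅ (t : ℕ) (_ : 2 ^ k ≤ Nat.card {v : Fin d → Bool //
        informed (SimpleGraph.fromRel fun u v : Fin d → Bool =>
          Nat.card {i : Fin d // u i ≠ v i} = 1).Adj coin v0 t v ω}),
      (t : ℝ≥0∞)) ∂P ≤ ENNReal.ofReal (24 * ((k : ℝ) + 1) / p) := by
  let subcubeUninformed (t : ℕ) : Set Ω :=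
    ⋃ b : Fin k → Bool, {ω | ¬ informed (hypercube d).Adj coin v0 t (subcubeEmbedding v0 k b) ω}
  calc _ ≤ ∑' t, P (subcubeUninformed t) :=
        lintegral_iInf_le_tsum_measure
          (good := fun t ω => 2 ^ k ≤ Nat.card {v // informed (hypercube d).Adj coin v0 t v ω})
          (fun t => .iUnion fun b => (measurableSet_informed hcoin.1 t _).compl)
          fun t ω hω => two_pow_le_card_of_subcubeEmbedding hk fun b =>
            not_not.mp fun hb => hω (Set.mem_iUnion.mpr ⟨b, hb⟩)
    _ ≤ _ := tsum_le_add_geometric (fun _ => prob_le_one)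
        (measure_subcube_not_informed_le hcoin hp0.le hp1 k) _
    _ ≤ _ := natCeil_add_geometric_tail_le hp0 hp1 k
end
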